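/- arXiv:2601.04067 — 4 statements merged into one kernel-verified Lean document; each statement's English description precedes it below -/
import Mathlib

section
/- Let (Ω,𝓕,ℙ) be an atomless probability space and let ≿ be a risk preference on L^∞ (a transitive, law-invariant, L^∞-upper-semicontinuous binary relation on essentially bounded random variables). If ≿ exhibits diversification on antimonotonic and identically distributed pairs, then ≿ exhibits weak risk aversion, i.e., the constant random variable E[X] satisfies E[X] ≿ X for every X ∈ L^∞. -/
open MeasureTheory ProbabilityTheory Filter
open scoped ENNReal

section Defs

variable {Ω : Type*} [MeasurableSpace Ω]

/-- The probability space is atomless. -/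
def Atomless (μ : Measure Ω) : Prop :=
  ∀ s : Set Ω, MeasurableSet s → 0 < μ s →
    ∃ t : Set Ω, MeasurableSet t ∧ t ⊆ s ∧ 0 < μ t ∧ μ t < μ s

/-- `X` and `Y` are identically distributed. -/
def SameDist (μ : Measure Ω) (X Y : Ω → ℝ) : Prop :=
  Measure.map X μ = Measure.map Y μ

/-- `(X, Y)` is an antimonotonic pair. -/
def Antimonotonic (μ : Measure Ω) (X Y : Ω → ℝ) : Prop :=
  ∀ᵐ p ∂(μ.prod μ), (X p.1 - X p.2) * (Y p.1 - Y p.2) ≤ 0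

/-- `(X, Y)` is a comonotonic pair. -/
def Comonotonic (μ : Measure Ω) (X Y : Ω → ℝ) : Prop :=
  ∀ᵐ p ∂(μ.prod μ), 0 ≤ (X p.1 - X p.2) * (Y p.1 - Y p.2)

/-- `(X, Y)` is an exchangeable pair. -/
def Exchangeable (μ : Measure Ω) (X Y : Ω → ℝ) : Prop :=
  Measure.map (fun ω => (X ω, Y ω)) μ = Measure.map (fun ω => (Y ω, X ω)) μ

/-- `(X, Y)` is negatively quadrant dependent. -/
def NQD (μ : Measure Ω) (X Y : Ω → ℝ) : Prop :=
  ∀ x y : ℝ, μ {ω | X ω ≤ x ∧ Y ω ≤ y} ≤ μ {ω | X ω ≤ x} * μ {ω | Y ω ≤ y}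

/-- `X` dominates `Y` in the concave order. -/
def ConcaveOrdGE (μ : Measure Ω) (X Y : Ω → ℝ) : Prop :=
  ∀ u : ℝ → ℝ, ConcaveOn ℝ Set.univ u → (∫ ω, u (Y ω) ∂μ) ≤ ∫ ω, u (X ω) ∂μ

/-- The left quantile function `Q_X(t) = inf {x | P(X ≤ x) ≥ t}`. -/
noncomputable def leftQuantile (μ : Measure Ω) (X : Ω → ℝ) (t : ℝ) : ℝ :=
  sInf {x : ℝ | t ≤ (μ {ω | X ω ≤ x}).toReal}

/-- The essential supremum `inf {x | P(Z > x) = 0}`. -/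
noncomputable def essSupR (μ : Measure Ω) (Z : Ω → ℝ) : ℝ :=
  sInf {x : ℝ | μ {ω | x < Z ω} = 0}

/-- The essential infimum `sup {x | P(Z < x) = 0}`. -/
noncomputable def essInfR (μ : Measure Ω) (Z : Ω → ℝ) : ℝ :=
  sSup {x : ℝ | μ {ω | Z ω < x} = 0}

/-- The constant random variable `c`, as an element of `L^∞`. -/
noncomputable def constLp (μ : Measure Ω) [IsFiniteMeasure μ] (c : ℝ) : Lp ℝ ∞ μ :=
  (memLp_const c).toLp (fun _ => c)

variable (μ : Measure Ω) [IsFiniteMeasure μ] (R : Lp ℝ ∞ μ → Lp ℝ ∞ μ → Prop)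

/-- The relation is transitive. -/
def IsTrans' : Prop := ∀ X Y Z : Lp ℝ ∞ μ, R X Y → R Y Z → R X Z

/-- Law invariance: identically distributed payoffs are indifferent. -/
def LawInvariant : Prop :=
  ∀ X Y : Lp ℝ ∞ μ, SameDist μ (X : Ω → ℝ) (Y : Ω → ℝ) → R X Y ∧ R Y X

/-- Upper semicontinuity: upper contour sets are `L^∞`-norm closed. -/
def NormUSC : Prop := ∀ X : Lp ℝ ∞ μ, IsClosed {Y : Lp ℝ ∞ μ | R Y X}

/-- Continuity: upper and lower contour sets are `L^∞`-norm closed. -/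
def NormContinuous : Prop :=
  ∀ X : Lp ℝ ∞ μ, IsClosed {Y : Lp ℝ ∞ μ | R Y X} ∧ IsClosed {Y : Lp ℝ ∞ μ | R X Y}

/-- A set of `L^∞` payoffs is closed under bounded convergence (uniformly
bounded sequences converging almost surely). -/
def BddConvClosed (S : Set (Lp ℝ ∞ μ)) : Prop :=
  ∀ (Y : ℕ → Lp ℝ ∞ μ) (Z : Lp ℝ ∞ μ), (∀ n, Y n ∈ S) →
    (∃ C : ℝ, ∀ n, ‖Y n‖ ≤ C) →
    (∀ᵐ ω ∂μ, Tendsto (fun n => (Y n : Ω → ℝ) ω) atTop (nhds ((Z : Ω → ℝ) ω))) →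
    Z ∈ S

/-- Compact upper semicontinuity. -/
def CompactUSC : Prop := ∀ X : Lp ℝ ∞ μ, BddConvClosed μ {Y : Lp ℝ ∞ μ | R Y X}

/-- Compact continuity. -/
def CompactCont : Prop :=
  ∀ X : Lp ℝ ∞ μ,
    BddConvClosed μ {Y : Lp ℝ ∞ μ | R Y X} ∧ BddConvClosed μ {Y : Lp ℝ ∞ μ | R X Y}

/-- Diversification on the class of pairs satisfying `P`. -/
def DiversificationOn (P : Lp ℝ ∞ μ → Lp ℝ ∞ μ → Prop) : Prop :=
  ∀ X Y : Lp ℝ ∞ μ, P X Y → R X Y → R Y X →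
    ∀ l : ℝ, 0 ≤ l → l ≤ 1 → R (l • X + (1 - l) • Y) Y

/-- Anti-diversification on the class of pairs satisfying `P`. -/
def AntiDiversificationOn (P : Lp ℝ ∞ μ → Lp ℝ ∞ μ → Prop) : Prop :=
  ∀ X Y : Lp ℝ ∞ μ, P X Y → R X Y → R Y X →
    ∀ l : ℝ, 0 ≤ l → l ≤ 1 → R X (l • X + (1 - l) • Y)

/-- Diversification neutrality on the class of pairs satisfying `P`. -/
def DiversificationNeutralOn (P : Lp ℝ ∞ μ → Lp ℝ ∞ μ → Prop) : Prop :=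
  DiversificationOn μ R P ∧ AntiDiversificationOn μ R P

/-- Weak risk aversion: `E[X] ≿ X`. -/
def WeakRiskAverse : Prop :=
  ∀ X : Lp ℝ ∞ μ, R (constLp μ (∫ ω, (X : Ω → ℝ) ω ∂μ)) X

/-- Strong risk aversion: `X ≥_cv Y` implies `X ≿ Y`. -/
def StrongRiskAverse : Prop :=
  ∀ X Y : Lp ℝ ∞ μ, ConcaveOrdGE μ (X : Ω → ℝ) (Y : Ω → ℝ) → R X Y

/-- Risk neutrality: `E[X] ≃ X`. -/
def RiskNeutral : Prop :=
  ∀ X : Lp ℝ ∞ μ, R (constLp μ (∫ ω, (X : Ω → ℝ) ω ∂μ)) X ∧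
    R X (constLp μ (∫ ω, (X : Ω → ℝ) ω ∂μ))

end Defs

namespace RiskAux

open Set

variable {Ω : Type*} [MeasurableSpace Ω] {μ : Measure Ω}

lemma exists_small (h : Atomless μ) {s : Set Ω} (hs : MeasurableSet s) (hpos : 0 < μ s)
    (hfin : μ s ≠ ∞) (n : ℕ) :
    ∃ t, MeasurableSet t ∧ t ⊆ s ∧ 0 < μ t ∧ μ t ≤ μ s / 2 ^ n := by
  induction n with
  | zero => exact ⟨s, hs, subset_rfl, hpos, by simp⟩
  | succ n ih =>
    obtain ⟨t, ht, hts, htpos, htle⟩ := ih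
    have htfin : μ t ≠ ∞ := ne_top_of_le_ne_top hfin (measure_mono hts)
    obtain ⟨u, hu, hut, hupos, hult⟩ := h t ht htpos
    have hdiv2 : μ t / 2 ≤ μ s / 2 ^ (n + 1) := by
      rw [pow_succ]
      calc μ t / 2 ≤ (μ s / 2 ^ n) / 2 := by
            exact ENNReal.div_le_div_right htle 2
        _ = μ s / (2 ^ n * 2) := by
            rw [div_eq_mul_inv, div_eq_mul_inv, div_eq_mul_inv, mul_assoc,
              ENNReal.mul_inv (by simp) (by simp)]
    rcases le_total (μ u) (μ t / 2) with hc | hc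
    · exact ⟨u, hu, hut.trans hts, hupos, hc.trans hdiv2⟩
    · refine ⟨t \ u, ht.diff hu, diff_subset.trans hts, ?_, ?_⟩
      · rw [measure_diff hut hu.nullMeasurableSet (ne_top_of_lt hult)]
        exact tsub_pos_of_lt hult
      · rw [measure_diff hut hu.nullMeasurableSet (ne_top_of_lt hult)]
        refine le_trans ?_ hdiv2
        rw [tsub_le_iff_right]
        calc μ t = μ t / 2 + μ t / 2 := (ENNReal.add_halves _).symm
          _ ≤ μ t / 2 + μ u := by gcongr


/-- any positive gap can be filled a bit: a subset of positive measure at most `δ` -/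
lemma exists_le (h : Atomless μ) {s : Set Ω} (hs : MeasurableSet s) (hpos : 0 < μ s)
    (hfin : μ s ≠ ∞) {δ : ℝ≥0∞} (hδ : 0 < δ) :
    ∃ t, MeasurableSet t ∧ t ⊆ s ∧ 0 < μ t ∧ μ t ≤ δ := by
  rcases eq_or_ne δ ∞ with rfl | hδt
  · obtain ⟨t, ht, hts, htpos, _⟩ := exists_small h hs hpos hfin 0
    exact ⟨t, ht, hts, htpos, le_top⟩
  obtain ⟨n, hn⟩ := ENNReal.exists_nat_mul_gt hδ.ne' hfin
  obtain ⟨t, ht, hts, htpos, htle⟩ := exists_small h hs hpos hfin n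
  refine ⟨t, ht, hts, htpos, htle.trans ?_⟩
  rw [ENNReal.div_le_iff_le_mul (Or.inl (by positivity)) (Or.inl (ENNReal.pow_ne_top (by simp)))]
  calc μ s ≤ n * δ := hn.le
    _ ≤ 2 ^ n * δ := by
        gcongr
        exact_mod_cast Nat.lt_two_pow_self.le
    _ = δ * 2 ^ n := mul_comm _ _

lemma exists_subset_measure_eq (h : Atomless μ) {s : Set Ω} (hs : MeasurableSet s)
    (hfin : μ s ≠ ∞) {r : ℝ≥0∞} (hr : r ≤ μ s) :
    ∃ t, MeasurableSet t ∧ t ⊆ s ∧ μ t = r := by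
  classical
  set P : Set Ω → Prop := fun t => MeasurableSet t ∧ t ⊆ s ∧ μ t ≤ r with hPdef
  have key : ∀ t, P t → ∃ u, MeasurableSet u ∧ u ⊆ s \ t ∧ μ t + μ u ≤ r ∧
      ∀ w, MeasurableSet w → w ⊆ s \ t → μ t + μ w ≤ r → μ w ≤ 2 * μ u := by
    rintro t ⟨ht, hts, htr⟩
    set c := ⨆ (w : Set Ω) (_ : MeasurableSet w ∧ w ⊆ s \ t ∧ μ t + μ w ≤ r), μ w with hc
    rcases eq_or_ne c 0 with hc0 | hc0
    · refine ⟨∅, MeasurableSet.empty, empty_subset _, by simpa, ?_⟩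
      intro w hwm hw1 hw2
      have : μ w ≤ c := le_iSup₂_of_le w ⟨hwm, hw1, hw2⟩ le_rfl
      simpa [hc0] using this
    · have hcfin : c ≠ ∞ := by
        refine ne_top_of_le_ne_top hfin ?_
        exact iSup₂_le fun w hw => measure_mono (hw.2.1.trans diff_subset)
      have hhalf : c / 2 < c := ENNReal.half_lt_self hc0 hcfin
      obtain ⟨w, hw, hwgt⟩ : ∃ w, (MeasurableSet w ∧ w ⊆ s \ t ∧ μ t + μ w ≤ r) ∧ c / 2 < μ w := by
        by_contra hcon
        push_neg at hcon
        have : c ≤ c / 2 := iSup₂_le fun w hw => hcon w hw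
        exact absurd (this.trans_lt hhalf) (lt_irrefl _)
      refine ⟨w, hw.1, hw.2.1, hw.2.2, ?_⟩
      intro w' hw'm hw'1 hw'2
      have h1 : μ w' ≤ c := le_iSup₂_of_le w' ⟨hw'm, hw'1, hw'2⟩ le_rfl
      calc μ w' ≤ c := h1
        _ = c / 2 + c / 2 := (ENNReal.add_halves _).symm
        _ ≤ μ w + μ w := add_le_add hwgt.le hwgt.le
        _ = 2 * μ w := (two_mul _).symm
  -- the greedy step function
  set g : Set Ω → Set Ω := fun t => if hpt : P t then t ∪ Classical.choose (key t hpt) else ∅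
    with hg
  have hgP : ∀ t (hpt : P t), g t = t ∪ Classical.choose (key t hpt) := by
    intro t hpt
    simp only [hg]
    exact dif_pos hpt
  set T : ℕ → Set Ω := fun n => g^[n] ∅ with hT
  have hTsucc : ∀ n, T (n + 1) = g (T n) := by
    intro n
    simp [hT, Function.iterate_succ_apply']
  have hP0 : P ∅ := ⟨MeasurableSet.empty, empty_subset _, by simp⟩
  have hPT : ∀ n, P (T n) := by
    intro n
    induction n with
    | zero => exact hP0
    | succ n ih =>
      rw [hTsucc, hgP _ ih]
      obtain ⟨hum, hus, hμ, _⟩ := Classical.choose_spec (key (T n) ih)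
      exact ⟨ih.1.union hum, union_subset ih.2.1 (hus.trans diff_subset), by
        calc μ (T n ∪ _) ≤ μ (T n) + μ _ := measure_union_le _ _
          _ ≤ r := hμ⟩
  have hmono : Monotone T := by
    refine monotone_nat_of_le_succ fun n => ?_
    rw [hTsucc, hgP _ (hPT n)]
    exact subset_union_left
  have hMU : ∀ n, μ (T (n + 1)) = μ (T n) + μ (Classical.choose (key (T n) (hPT n))) := by
    intro n
    rw [hTsucc, hgP _ (hPT n)]
    obtain ⟨hum, hus, hμ, _⟩ := Classical.choose_spec (key (T n) (hPT n))
    rw [measure_union _ hum]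
    exact (subset_diff.mp hus).2.symm
  set A := ⋃ n, T n with hA
  have hAm : MeasurableSet A := MeasurableSet.iUnion fun n => (hPT n).1
  have hAs : A ⊆ s := iUnion_subset fun n => (hPT n).2.1
  have hAμ : μ A = ⨆ n, μ (T n) := (hmono.directed_le).measure_iUnion
  have hAr : μ A ≤ r := by
    rw [hAμ]; exact iSup_le fun n => (hPT n).2.2
  refine ⟨A, hAm, hAs, ?_⟩
  by_contra hne
  have hlt : μ A < r := lt_of_le_of_ne hAr hne
  have hδpos : 0 < r - μ A := tsub_pos_of_lt hlt
  have hAfin : μ A ≠ ∞ := ne_top_of_le_ne_top hfin (measure_mono hAs)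
  have hdiffpos : 0 < μ (s \ A) := by
    have hd : μ (s \ A) = μ s - μ A := measure_diff hAs hAm.nullMeasurableSet hAfin
    rw [hd]
    exact lt_of_lt_of_le hδpos (tsub_le_tsub_right hr _)
  obtain ⟨w, hwm, hws, hwpos, hwle⟩ :=
    exists_le h (hs.diff hAm) hdiffpos (ne_top_of_le_ne_top hfin (measure_mono diff_subset)) hδpos
  have hadm : ∀ n, μ w ≤ 2 * μ (Classical.choose (key (T n) (hPT n))) := by
    intro n
    obtain ⟨_, _, _, hmax⟩ := Classical.choose_spec (key (T n) (hPT n))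
    refine hmax w hwm (hws.trans (diff_subset_diff_right (subset_iUnion T n))) ?_
    calc μ (T n) + μ w ≤ μ A + (r - μ A) :=
          add_le_add (measure_mono (subset_iUnion T n)) hwle
      _ = r := add_tsub_cancel_of_le hAr
  have hgrow : ∀ n : ℕ, (n : ℝ≥0∞) * (μ w / 2) ≤ μ (T n) := by
    intro n
    induction n with
    | zero => simp
    | succ n ih =>
      have hstep : μ w / 2 ≤ μ (Classical.choose (key (T n) (hPT n))) := by
        rw [ENNReal.div_le_iff_le_mul (Or.inl two_ne_zero) (Or.inl (by simp))]
        rw [mul_comm]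
        exact hadm n
      calc ((n + 1 : ℕ) : ℝ≥0∞) * (μ w / 2) = (n : ℝ≥0∞) * (μ w / 2) + μ w / 2 := by
            push_cast; ring
        _ ≤ μ (T n) + μ (Classical.choose (key (T n) (hPT n))) := add_le_add ih hstep
        _ = μ (T (n + 1)) := (hMU n).symm
  have hw2 : μ w / 2 ≠ 0 := by
    simp only [ne_eq, ENNReal.div_eq_zero_iff, not_or]
    exact ⟨hwpos.ne', by simp⟩
  obtain ⟨n, hn⟩ := ENNReal.exists_nat_mul_gt hw2 (ne_top_of_le_ne_top hfin hr)
  exact absurd (hn.trans_le ((hgrow n).trans (hPT n).2.2)) (lt_irrefl _)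


/-- Construction of a uniform random variable on an atomless probability space. -/
lemma exists_uniform (h : Atomless μ) [IsProbabilityMeasure μ] :
    ∃ V : Ω → ℝ, Measurable V ∧ (∀ ω, V ω ∈ Icc (0:ℝ) 1) ∧
      (∀ t ∈ Icc (0:ℝ) 1, μ {ω | V ω ≤ t} = ENNReal.ofReal t) ∧
      (∀ t ∈ Icc (0:ℝ) 1, μ {ω | V ω < t} = ENNReal.ofReal t) := by
  classical
  -- a choice function halving measurable sets
  have halfex : ∀ s : Set Ω, ∃ t, MeasurableSet s →
      MeasurableSet t ∧ t ⊆ s ∧ μ t = μ s / 2 := by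
    intro s
    by_cases hsm : MeasurableSet s
    · obtain ⟨t, h1, h2, h3⟩ := exists_subset_measure_eq h hsm (measure_ne_top μ s)
        (ENNReal.half_le_self)
      exact ⟨t, fun _ => ⟨h1, h2, h3⟩⟩
    · exact ⟨∅, fun hc => absurd hc hsm⟩
  choose half halfspec using halfex
  -- the dyadic filtration
  let C : ℕ → ℕ → Set Ω := fun n => Nat.rec (motive := fun _ => ℕ → Set Ω)
    (fun k => if k = 0 then (∅ : Set Ω) else univ)
    (fun _ Cn k => if k % 2 = 0 then Cn (k / 2)
      else Cn (k / 2) ∪ half (Cn (k / 2 + 1) \ Cn (k / 2))) n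
  have hC0 : ∀ k, C 0 k = if k = 0 then (∅ : Set Ω) else univ := fun _ => rfl
  have hCs : ∀ n k, C (n + 1) k = if k % 2 = 0 then C n (k / 2)
      else C n (k / 2) ∪ half (C n (k / 2 + 1) \ C n (k / 2)) := fun _ _ => rfl
  have hCm : ∀ n k, MeasurableSet (C n k) := by
    intro n
    induction n with
    | zero => intro k; rw [hC0]; split <;> simp
    | succ n ih =>
      intro k; rw [hCs]
      split
      · exact ih _
      · exact (ih _).union (halfspec _ ((ih _).diff (ih _))).1
  have hCmono1 : ∀ n k, C n k ⊆ C n (k + 1) := by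
    intro n
    induction n with
    | zero =>
      intro k
      rw [hC0, hC0]
      split
      · exact empty_subset _
      · simp
    | succ n ih =>
      intro k
      rcases Nat.even_or_odd k with ⟨j, hj⟩ | ⟨j, hj⟩
      · have hk2 : k % 2 = 0 := by omega
        have hk1 : (k + 1) % 2 ≠ 0 := by omega
        have hd : k / 2 = j := by omega
        have hd1 : (k + 1) / 2 = j := by omega
        rw [hCs, hCs, if_pos hk2, if_neg hk1, hd, hd1]
        exact subset_union_left
      · have hk2 : k % 2 ≠ 0 := by omega
        have hk1 : (k + 1) % 2 = 0 := by omega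
        have hd : k / 2 = j := by omega
        have hd1 : (k + 1) / 2 = j + 1 := by omega
        rw [hCs, hCs, if_neg hk2, if_pos hk1, hd, hd1]
        refine union_subset (ih j) ?_
        exact ((halfspec _ ((hCm n (j+1)).diff (hCm n j))).2.1).trans diff_subset
  have hCmono : ∀ n, Monotone (C n) := fun n => monotone_nat_of_le_succ (hCmono1 n)
  have hCfull : ∀ n k, 2 ^ n ≤ k → C n k = univ := by
    intro n
    induction n with
    | zero =>
      intro k hk
      rw [hC0, if_neg (by omega)]
    | succ n ih =>
      intro k hk
      have hp : 2 * 2 ^ n ≤ k := by rw [← pow_succ']; exact hk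
      rcases Nat.even_or_odd k with ⟨j, hj⟩ | ⟨j, hj⟩
      · have hk2 : k % 2 = 0 := by omega
        rw [hCs, if_pos hk2, ih _ (by omega)]
      · have hk2 : k % 2 ≠ 0 := by omega
        rw [hCs, if_neg hk2, ih _ (by omega)]
        simp
  -- arithmetic helpers
  have hdd : ∀ (m : ℕ) (a : ℝ≥0∞), a / 2 ^ m / 2 = a / 2 ^ (m + 1) := by
    intro m a
    rw [div_eq_mul_inv, div_eq_mul_inv, div_eq_mul_inv, mul_assoc, pow_succ,
      ENNReal.mul_inv (by simp) (by simp)]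
  have hfin' : ∀ (j m : ℕ), ((j : ℝ≥0∞) / 2 ^ m) ≠ ∞ := by
    intro j m
    exact (ENNReal.div_lt_top (by simp) (by positivity)).ne
  have heven : ∀ (j m : ℕ), ((2 * j : ℕ) : ℝ≥0∞) / 2 ^ (m + 1) = (j : ℝ≥0∞) / 2 ^ m := by
    intro j m
    rw [pow_succ']
    push_cast
    exact ENNReal.mul_div_mul_left _ _ two_ne_zero (by simp)
  have hCμ : ∀ n k, k ≤ 2 ^ n → μ (C n k) = (k : ℝ≥0∞) / 2 ^ n := by
    intro n
    induction n with
    | zero =>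
      intro k hk
      interval_cases k
      · rw [hC0]; simp
      · rw [hC0]; simp
    | succ n ih =>
      intro k hk
      have hp : k ≤ 2 * 2 ^ n := by rw [← pow_succ']; exact hk
      rcases Nat.even_or_odd k with ⟨j, hj⟩ | ⟨j, hj⟩
      · have hk2 : k % 2 = 0 := by omega
        have hd : k / 2 = j := by omega
        rw [hCs, if_pos hk2, hd, ih j (by omega)]
        have : k = 2 * j := by omega
        rw [this, heven]
      · have hk2 : k % 2 ≠ 0 := by omega
        have hd : k / 2 = j := by omega
        have hj1 : j + 1 ≤ 2 ^ n := by omega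
        have hdm : MeasurableSet (C n (j + 1) \ C n j) := (hCm n (j+1)).diff (hCm n j)
        obtain ⟨hhm, hhs, hhμ⟩ := halfspec _ hdm
        have hdisj : Disjoint (C n j) (half (C n (j + 1) \ C n j)) :=
          (disjoint_sdiff_right).mono_right hhs
        have hdiffμ : μ (C n (j + 1) \ C n j) = 1 / 2 ^ n := by
          rw [measure_diff (hCmono1 n j) (hCm n j).nullMeasurableSet (measure_ne_top μ _),
            ih (j + 1) hj1, ih j (by omega)]
          have hsplit : ((j + 1 : ℕ) : ℝ≥0∞) / 2 ^ n = (j : ℝ≥0∞) / 2 ^ n + 1 / 2 ^ n := by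
            rw [ENNReal.div_add_div_same]
            push_cast
            ring_nf
          rw [hsplit, ENNReal.add_sub_cancel_left (hfin' j n)]
        rw [hCs, if_neg hk2, hd, measure_union hdisj hhm, ih j (by omega), hhμ, hdiffμ, hdd]
        have hkj : k = 2 * j + 1 := by omega
        subst hkj
        rw [← heven j n]
        rw [ENNReal.div_add_div_same]
        congr 1
        push_cast
        ring
  -- consistency across levels
  have hCc : ∀ n k, C (n + 1) (2 * k) = C n k := by
    intro n k
    rw [hCs, if_pos (by omega)]
    have h2 : 2 * k / 2 = k := by omega
    rw [h2]
  have hClift : ∀ n q k, C (n + q) (k * 2 ^ q) = C n k := by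
    intro n q
    induction q with
    | zero => simp
    | succ q ih =>
      intro k
      have h1 : k * 2 ^ (q + 1) = 2 * (k * 2 ^ q) := by ring
      rw [show n + (q + 1) = (n + q) + 1 from rfl, h1, hCc, ih]
  have hCle : ∀ (n j m k : ℕ), (j : ℝ) / 2 ^ n ≤ (k : ℝ) / 2 ^ m → C n j ⊆ C m k := by
    intro n j m k hle
    have hnat : j * 2 ^ m ≤ k * 2 ^ n := by
      have h2 : (j : ℝ) * 2 ^ m ≤ (k : ℝ) * 2 ^ n := by
        rw [div_le_div_iff₀ (by positivity) (by positivity)] at hle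
        exact_mod_cast hle
      exact_mod_cast h2
    calc C n j = C (n + m) (j * 2 ^ m) := (hClift n m j).symm
      _ ⊆ C (n + m) (k * 2 ^ n) := hCmono _ hnat
      _ = C (m + n) (k * 2 ^ n) := by rw [Nat.add_comm]
      _ = C m k := hClift m n k
  have hcast : ∀ (k m : ℕ), (k : ℝ≥0∞) / 2 ^ m = ENNReal.ofReal ((k : ℝ) / 2 ^ m) := by
    intro k m
    rw [ENNReal.ofReal_div_of_pos (by positivity), ENNReal.ofReal_natCast,
      ENNReal.ofReal_pow (by norm_num), ENNReal.ofReal_ofNat]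
  -- the uniform random variable
  set S : Ω → Set ℝ := fun ω => {q : ℝ | ∃ n k : ℕ, k ≤ 2 ^ n ∧ ω ∈ C n k ∧ q = (k : ℝ) / 2 ^ n}
    with hS
  have hone : ∀ ω, (1 : ℝ) ∈ S ω := by
    intro ω
    refine ⟨0, 1, by norm_num, ?_, by norm_num⟩
    rw [hC0]
    simp
  have hSne : ∀ ω, (S ω).Nonempty := fun ω => ⟨1, hone ω⟩
  have hSbdd : ∀ ω, BddBelow (S ω) := by
    intro ω
    refine ⟨0, ?_⟩
    rintro q ⟨n, k, _, _, rfl⟩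
    positivity
  set V : Ω → ℝ := fun ω => sInf (S ω) with hV
  have hV0 : ∀ ω, 0 ≤ V ω := by
    intro ω
    refine le_csInf (hSne ω) ?_
    rintro q ⟨n, k, _, _, rfl⟩
    positivity
  have hV1 : ∀ ω, V ω ≤ 1 := fun ω => csInf_le (hSbdd ω) (hone ω)
  have hVlt : ∀ ω (t : ℝ), V ω < t ↔ ∃ n k : ℕ, k ≤ 2 ^ n ∧ ω ∈ C n k ∧ (k : ℝ) / 2 ^ n < t := by
    intro ω t
    rw [hV, csInf_lt_iff (hSbdd ω) (hSne ω)]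
    constructor
    · rintro ⟨q, ⟨n, k, h1, h2, rfl⟩, h3⟩
      exact ⟨n, k, h1, h2, h3⟩
    · rintro ⟨n, k, h1, h2, h3⟩
      exact ⟨_, ⟨n, k, h1, h2, rfl⟩, h3⟩
  have hVsetlt : ∀ t : ℝ, {ω | V ω < t} =
      ⋃ (p : ℕ × ℕ), ⋃ (_ : p.2 ≤ 2 ^ p.1 ∧ (p.2 : ℝ) / 2 ^ p.1 < t), C p.1 p.2 := by
    intro t
    ext ω
    simp only [mem_setOf_eq, mem_iUnion]
    rw [hVlt ω t]
    constructor
    · rintro ⟨n, k, h1, h2, h3⟩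
      exact ⟨(n, k), ⟨h1, h3⟩, h2⟩
    · rintro ⟨⟨n, k⟩, ⟨h1, h3⟩, h2⟩
      exact ⟨n, k, h1, h2, h3⟩
  have hVmeas : Measurable V := by
    apply measurable_of_Iio
    intro t
    have heq : V ⁻¹' Iio t = {ω | V ω < t} := rfl
    rw [heq, hVsetlt]
    exact MeasurableSet.iUnion fun p => MeasurableSet.iUnion fun _ => hCm _ _
  have hVltμ : ∀ t : ℝ, 0 < t → t ≤ 1 → μ {ω | V ω < t} = ENNReal.ofReal t := by
    intro t ht0 ht1
    set km : ℕ → ℕ := fun m => ⌈t * 2 ^ m⌉₊ - 1 with hkm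
    have hkc : ∀ m, 1 ≤ ⌈t * 2 ^ m⌉₊ := by
      intro m
      rw [Nat.one_le_iff_ne_zero, ← Nat.pos_iff_ne_zero, Nat.ceil_pos]
      positivity
    have hklt : ∀ m, (km m : ℝ) < t * 2 ^ m := by
      intro m
      rw [hkm]
      push_cast [Nat.cast_sub (hkc m)]
      have := Nat.ceil_lt_add_one (by positivity : (0:ℝ) ≤ t * 2 ^ m)
      linarith
    have hkdiv : ∀ m, (km m : ℝ) / 2 ^ m < t := by
      intro m
      rw [div_lt_iff₀ (by positivity)]
      exact hklt m
    have hkle : ∀ m, km m ≤ 2 ^ m := by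
      intro m
      have hc : ⌈t * 2 ^ m⌉₊ ≤ 2 ^ m := by
        apply Nat.ceil_le.mpr
        calc t * 2 ^ m ≤ 1 * 2 ^ m := by gcongr
          _ = ((2 ^ m : ℕ) : ℝ) := by push_cast; ring
      simp only [hkm]
      omega
    have hklow : ∀ m, t - 1 / 2 ^ m ≤ (km m : ℝ) / 2 ^ m := by
      intro m
      have h1 := Nat.le_ceil (t * 2 ^ m)
      have h2 : ((⌈t * 2 ^ m⌉₊ : ℝ)) = (km m : ℝ) + 1 := by
        simp only [hkm]
        push_cast [Nat.cast_sub (hkc m)]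
        ring
      rw [h2] at h1
      rw [sub_le_iff_le_add, ← add_div, le_div_iff₀ (by positivity)]
      linarith
    have hkmono : ∀ m, 2 * km m ≤ km (m + 1) := by
      intro m
      have h1 : ((2 * km m : ℕ) : ℝ) < t * 2 ^ (m + 1) := by
        push_cast
        calc (2 : ℝ) * km m < 2 * (t * 2 ^ m) := by
              have := hklt m
              linarith
          _ = t * 2 ^ (m + 1) := by ring
      have h2 : 2 * km m < ⌈t * 2 ^ (m + 1)⌉₊ := Nat.lt_ceil.mpr h1
      have h3 := hkc (m + 1)
      have e1 : km m = ⌈t * 2 ^ m⌉₊ - 1 := by rw [hkm]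
      have e2 : km (m + 1) = ⌈t * 2 ^ (m + 1)⌉₊ - 1 := by rw [hkm]
      omega
    have hEq : {ω | V ω < t} = ⋃ m, C m (km m) := by
      ext ω
      simp only [mem_setOf_eq, mem_iUnion]
      constructor
      · intro hv
        obtain ⟨n, k, h1, h2, h3⟩ := (hVlt ω t).mp hv
        refine ⟨n, hCmono n ?_ h2⟩
        have hr1 : (k : ℝ) < t * 2 ^ n := (div_lt_iff₀ (by positivity)).mp h3
        have hr2 : k < ⌈t * 2 ^ n⌉₊ := Nat.lt_ceil.mpr hr1
        have e1 : km n = ⌈t * 2 ^ n⌉₊ - 1 := by rw [hkm]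
        have h3 := hkc n
        omega
      · rintro ⟨m, hm⟩
        exact (hVlt ω t).mpr ⟨m, km m, hkle m, hm, hkdiv m⟩
    have hmonoset : Monotone fun m => C m (km m) := by
      refine monotone_nat_of_le_succ fun m => ?_
      calc C m (km m) = C (m + 1) (2 * km m) := (hCc m (km m)).symm
        _ ⊆ C (m + 1) (km (m + 1)) := hCmono (m + 1) (hkmono m)
    have hval : ∀ m, μ (C m (km m)) = ENNReal.ofReal ((km m : ℝ) / 2 ^ m) := by
      intro m
      rw [hCμ m (km m) (hkle m), hcast]
    rw [hEq, hmonoset.directed_le.measure_iUnion]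
    apply le_antisymm
    · refine iSup_le fun m => ?_
      rw [hval]
      exact ENNReal.ofReal_le_ofReal (hkdiv m).le
    · refine ENNReal.le_of_forall_pos_le_add fun ε hε hfin2 => ?_
      obtain ⟨m, hm⟩ := exists_pow_lt_of_lt_one (by exact_mod_cast hε : (0:ℝ) < (ε : ℝ))
        (by norm_num : (1:ℝ) / 2 < 1)
      have hpow : (1 : ℝ) / 2 ^ m = (1 / 2 : ℝ) ^ m := by
        rw [div_pow, one_pow]
      calc ENNReal.ofReal t ≤ ENNReal.ofReal ((km m : ℝ) / 2 ^ m + 1 / 2 ^ m) := by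
            apply ENNReal.ofReal_le_ofReal
            linarith [hklow m]
        _ ≤ ENNReal.ofReal ((km m : ℝ) / 2 ^ m) + ENNReal.ofReal (1 / 2 ^ m) :=
            ENNReal.ofReal_add_le
        _ ≤ (⨆ m, μ (C m (km m))) + ↑ε := by
            gcongr
            · rw [← hval]
              exact le_iSup (fun m => μ (C m (km m))) m
            · rw [← ENNReal.ofReal_coe_nnreal]
              apply ENNReal.ofReal_le_ofReal
              rw [hpow]
              exact hm.le
  refine ⟨V, hVmeas, fun ω => ⟨hV0 ω, hV1 ω⟩, ?_, ?_⟩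
  · rintro t ⟨ht0, ht1⟩
    rcases eq_or_lt_of_le ht1 with rfl | ht1'
    · have huniv : {ω | V ω ≤ 1} = univ := eq_univ_of_forall fun ω => hV1 ω
      rw [huniv, measure_univ, ENNReal.ofReal_one]
    · apply le_antisymm
      · refine ENNReal.le_of_forall_pos_le_add fun ε hε hfin2 => ?_
        have hεR : (0 : ℝ) < ε := by exact_mod_cast hε
        set t' := min 1 (t + ε) with ht'
        have htt' : t < t' := lt_min ht1' (by linarith)
        have h1 : {ω | V ω ≤ t} ⊆ {ω | V ω < t'} := fun ω hω => lt_of_le_of_lt hω htt'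
        calc μ {ω | V ω ≤ t} ≤ μ {ω | V ω < t'} := measure_mono h1
          _ = ENNReal.ofReal t' := hVltμ t' (lt_of_le_of_lt ht0 htt') (min_le_left _ _)
          _ ≤ ENNReal.ofReal (t + ε) := ENNReal.ofReal_le_ofReal (min_le_right _ _)
          _ ≤ ENNReal.ofReal t + ENNReal.ofReal ε := ENNReal.ofReal_add_le
          _ = ENNReal.ofReal t + ↑ε := by rw [ENNReal.ofReal_coe_nnreal]
      · rcases eq_or_lt_of_le ht0 with rfl | ht0'
        · simp
        · rw [← hVltμ t ht0' ht1]
          exact measure_mono (Set.setOf_subset_setOf.mpr fun ω => le_of_lt)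
  · rintro t ⟨ht0, ht1⟩
    rcases eq_or_lt_of_le ht0 with rfl | ht0'
    · have hempty : {ω | V ω < 0} = ∅ :=
        eq_empty_iff_forall_notMem.mpr fun ω hω => absurd hω (not_lt.mpr (hV0 ω))
      rw [hempty]
      simp
    · exact hVltμ t ht0' ht1


/-- real-valued cdf -/
noncomputable def cdfR (μ : Measure Ω) (f : Ω → ℝ) (x : ℝ) : ℝ := (μ {ω | f ω ≤ x}).toReal

/-- left-quantile function -/
noncomputable def qtl (μ : Measure Ω) (f : Ω → ℝ) (t : ℝ) : ℝ :=
  sInf {x : ℝ | t ≤ cdfR μ f x}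

/-- uniform distribution on `[0,1]` -/
def IsUnif (μ : Measure Ω) (V : Ω → ℝ) : Prop :=
  Measurable V ∧ (∀ ω, V ω ∈ Icc (0:ℝ) 1) ∧
    (∀ t ∈ Icc (0:ℝ) 1, μ {ω | V ω ≤ t} = ENNReal.ofReal t) ∧
    (∀ t ∈ Icc (0:ℝ) 1, μ {ω | V ω < t} = ENNReal.ofReal t)

section Unif

variable [IsProbabilityMeasure μ]

lemma IsUnif.one_sub {V : Ω → ℝ} (hV : IsUnif μ V) : IsUnif μ (fun ω => 1 - V ω) := by
  obtain ⟨hm, h01, hle, hlt⟩ := hV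
  have key : ∀ t ∈ Icc (0:ℝ) 1, ENNReal.ofReal (1 - t) + ENNReal.ofReal t = 1 := by
    rintro t ⟨ht0, ht1⟩
    rw [← ENNReal.ofReal_add (by linarith) ht0]
    norm_num
  refine ⟨measurable_const.sub hm, fun ω => ?_, ?_, ?_⟩
  · have h2 := h01 ω
    rw [mem_Icc] at h2 ⊢
    obtain ⟨h2a, h2b⟩ := h2
    show (0:ℝ) ≤ 1 - V ω ∧ 1 - V ω ≤ 1
    constructor <;> linarith
  · rintro t ⟨ht0, ht1⟩
    have hset : {ω | 1 - V ω ≤ t} = {ω | V ω < 1 - t}ᶜ := by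
      ext ω; simp only [mem_setOf_eq, mem_compl_iff, not_lt]; constructor <;> intro h <;> linarith
    rw [hset, measure_compl (by exact (hm measurableSet_Iio : MeasurableSet {ω | V ω < 1 - t}))
      (measure_ne_top μ _), measure_univ, hlt (1 - t) ⟨by linarith, by linarith⟩]
    rw [← key t ⟨ht0, ht1⟩]
    simp [ENNReal.add_sub_cancel_left, ENNReal.ofReal_ne_top]
  · rintro t ⟨ht0, ht1⟩
    have hset : {ω | 1 - V ω < t} = {ω | V ω ≤ 1 - t}ᶜ := by
      ext ω; simp only [mem_setOf_eq, mem_compl_iff, not_le]; constructor <;> intro h <;> linarith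
    rw [hset, measure_compl (by exact (hm measurableSet_Iic : MeasurableSet {ω | V ω ≤ 1 - t}))
      (measure_ne_top μ _), measure_univ, hle (1 - t) ⟨by linarith, by linarith⟩]
    rw [← key t ⟨ht0, ht1⟩]
    simp [ENNReal.add_sub_cancel_left, ENNReal.ofReal_ne_top]

variable {f : Ω → ℝ} {a b : ℝ}

lemma cdfR_mono (hf : Measurable f) : Monotone (cdfR μ f) := by
  intro x y hxy
  exact ENNReal.toReal_mono (measure_ne_top μ _)
    (measure_mono (setOf_subset_setOf.mpr fun ω h => h.trans hxy))

lemma cdfR_nonneg (x : ℝ) : 0 ≤ cdfR μ f x := ENNReal.toReal_nonneg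

lemma cdfR_le_one (x : ℝ) : cdfR μ f x ≤ 1 := by
  rw [cdfR, ← ENNReal.toReal_one]
  exact ENNReal.toReal_mono (by simp) (prob_le_one)

lemma cdfR_one (hbd : ∀ᵐ ω ∂μ, f ω ∈ Icc a b) {x : ℝ} (hx : b ≤ x) :
    μ {ω | f ω ≤ x} = 1 := by
  have h1 : {ω | f ω ≤ x} =ᵐ[μ] (univ : Set Ω) := by
    rw [Filter.eventuallyEq_univ]
    filter_upwards [hbd] with ω hω
    exact (mem_setOf_eq ▸ hω.2.trans hx : ω ∈ {ω | f ω ≤ x})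
  rw [measure_congr h1, measure_univ]

lemma cdfR_one' (hbd : ∀ᵐ ω ∂μ, f ω ∈ Icc a b) {x : ℝ} (hx : b ≤ x) : cdfR μ f x = 1 := by
  rw [cdfR, cdfR_one hbd hx, ENNReal.toReal_one]

lemma cdfR_zero (hbd : ∀ᵐ ω ∂μ, f ω ∈ Icc a b) {x : ℝ} (hx : x < a) : cdfR μ f x = 0 := by
  have h1 : μ {ω | f ω ≤ x} = 0 := by
    refine measure_mono_null (fun ω (h : f ω ≤ x) => ?_) (ae_iff.mp hbd)
    simp only [mem_setOf_eq, Icc, not_and_or, not_le]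
    left; linarith
  rw [cdfR, h1, ENNReal.toReal_zero]

/-- key: the quantile sublevel characterization (uses right-continuity of the cdf) -/
lemma qtl_le_iff (hf : Measurable f) (hbd : ∀ᵐ ω ∂μ, f ω ∈ Icc a b) {t : ℝ}
    (ht0 : 0 < t) (ht1 : t ≤ 1) (x : ℝ) :
    qtl μ f t ≤ x ↔ t ≤ cdfR μ f x := by
  have hbS : b ∈ {x : ℝ | t ≤ cdfR μ f x} := by
    simp only [mem_setOf_eq, cdfR_one' hbd le_rfl]; exact ht1
  have hne : {x : ℝ | t ≤ cdfR μ f x}.Nonempty := ⟨b, hbS⟩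
  have hbdd : BddBelow {x : ℝ | t ≤ cdfR μ f x} := by
    refine ⟨a, fun y hy => ?_⟩
    by_contra hya
    push_neg at hya
    rw [mem_setOf_eq, cdfR_zero hbd hya] at hy
    linarith
  constructor
  · intro h
    have hstep : ∀ n : ℕ, t ≤ cdfR μ f (x + 1 / (n + 1)) := by
      intro n
      have hlt : sInf {x : ℝ | t ≤ cdfR μ f x} < x + 1 / (n + 1) := by
        refine lt_of_le_of_lt h ?_
        have : (0:ℝ) < 1 / (n + 1) := by positivity
        linarith
      obtain ⟨y, hy, hyx⟩ := (csInf_lt_iff hbdd hne).mp hlt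
      exact le_trans hy (cdfR_mono hf hyx.le)
    -- right continuity
    have hinter : {ω | f ω ≤ x} = ⋂ n : ℕ, {ω | f ω ≤ x + 1 / (n + 1)} := by
      ext ω
      simp only [mem_setOf_eq, mem_iInter]
      constructor
      · intro h n
        have : (0:ℝ) < 1 / (n + 1) := by positivity
        linarith
      · intro h
        by_contra hc
        push_neg at hc
        obtain ⟨n, hn⟩ := exists_nat_one_div_lt (by linarith : (0:ℝ) < f ω - x)
        have := h n
        linarith [hn]
    have htd : Tendsto (fun n : ℕ => μ {ω | f ω ≤ x + 1 / (n + 1)}) atTop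
        (nhds (μ {ω | f ω ≤ x})) := by
      rw [hinter]
      refine tendsto_measure_iInter_atTop (fun n => (hf measurableSet_Iic).nullMeasurableSet) ?_
        ⟨0, measure_ne_top μ _⟩
      intro m n hmn
      refine setOf_subset_setOf.mpr fun ω h => h.trans ?_
      have hc : (m : ℝ) ≤ n := Nat.cast_le.mpr hmn
      have : (1:ℝ) / (n + 1) ≤ 1 / (m + 1) := by
        apply one_div_le_one_div_of_le (by positivity)
        linarith
      linarith
    have htd2 : Tendsto (fun n : ℕ => cdfR μ f (x + 1 / (n + 1))) atTop
        (nhds (cdfR μ f x)) := by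
      exact (ENNReal.tendsto_toReal (measure_ne_top μ _)).comp htd
    exact le_of_tendsto_of_tendsto' tendsto_const_nhds htd2 hstep
  · intro h
    exact csInf_le hbdd h

lemma qtl_mem_Icc (hf : Measurable f) (hbd : ∀ᵐ ω ∂μ, f ω ∈ Icc a b) {t : ℝ}
    (ht0 : 0 < t) (ht1 : t ≤ 1) : qtl μ f t ∈ Icc a b := by
  constructor
  · refine le_csInf ⟨b, by simp only [mem_setOf_eq, cdfR_one' hbd le_rfl]; exact ht1⟩ ?_
    intro y hy
    by_contra hya
    push_neg at hya
    rw [mem_setOf_eq, cdfR_zero hbd hya] at hy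
    linarith
  · exact (qtl_le_iff hf hbd ht0 ht1 b).mpr (by rw [cdfR_one' hbd le_rfl]; exact ht1)

lemma qtl_mono (hf : Measurable f) (hbd : ∀ᵐ ω ∂μ, f ω ∈ Icc a b) {u v : ℝ}
    (hu0 : 0 < u) (hv1 : v ≤ 1) (huv : u ≤ v) : qtl μ f u ≤ qtl μ f v := by
  have hv0 : 0 < v := lt_of_lt_of_le hu0 huv
  have hu1 : u ≤ 1 := huv.trans hv1
  have hvS : v ≤ cdfR μ f (qtl μ f v) := (qtl_le_iff hf hbd hv0 hv1 _).mp le_rfl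
  exact (qtl_le_iff hf hbd hu0 hu1 _).mpr (le_trans huv hvS)

lemma ae_pair {P : Ω → Prop} (h : ∀ᵐ ω ∂μ, P ω) :
    ∀ᵐ p ∂(μ.prod μ), P p.1 ∧ P p.2 := by
  obtain ⟨t, hsub, htm, ht0⟩ := exists_measurable_superset_of_null (ae_iff.mp h)
  rw [ae_iff]
  have hz : μ.prod μ (t ×ˢ univ ∪ univ ×ˢ t) = 0 := by
    refine le_antisymm ?_ zero_le
    calc μ.prod μ (t ×ˢ univ ∪ univ ×ˢ t) ≤ μ.prod μ (t ×ˢ univ) + μ.prod μ (univ ×ˢ t) :=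
          measure_union_le _ _
      _ = 0 := by rw [Measure.prod_prod, Measure.prod_prod, ht0]; simp
  refine measure_mono_null (fun p hp => ?_) hz
  show p ∈ t ×ˢ univ ∪ univ ×ˢ t
  by_cases h1 : P p.1
  · have h2 : ¬ P p.2 := fun h2 => hp ⟨h1, h2⟩
    exact Or.inr ⟨mem_univ _, hsub h2⟩
  · exact Or.inl ⟨hsub h1, mem_univ _⟩

variable {V : Ω → ℝ}

lemma qtl_comp_measurable (hf : Measurable f) (hbd : ∀ᵐ ω ∂μ, f ω ∈ Icc a b)
    (hVm : Measurable V) (hV01 : ∀ ω, V ω ∈ Icc (0:ℝ) 1) :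
    Measurable fun ω => qtl μ f (V ω) := by
  apply measurable_of_Iic
  intro x
  have hset : (fun ω => qtl μ f (V ω)) ⁻¹' Iic x =
      ({ω | V ω = 0} ∩ {ω | qtl μ f 0 ≤ x}) ∪ ({ω | 0 < V ω} ∩ {ω | V ω ≤ cdfR μ f x}) := by
    ext ω
    simp only [mem_preimage, mem_Iic, mem_union, mem_inter_iff, mem_setOf_eq]
    constructor
    · intro h
      rcases eq_or_lt_of_le (hV01 ω).1 with h0 | h0
      · refine Or.inl ⟨h0.symm, ?_⟩
        rwa [← h0] at h
      · exact Or.inr ⟨h0, (qtl_le_iff hf hbd h0 (hV01 ω).2 x).mp h⟩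
    · intro h
      rcases h with ⟨h1, h2⟩ | ⟨h1, h2⟩
      · rw [h1]; exact h2
      · exact (qtl_le_iff hf hbd h1 (hV01 ω).2 x).mpr h2
  rw [show (fun ω => qtl μ f (V ω)) ⁻¹' Iic x =
      ({ω | V ω = 0} ∩ {ω | qtl μ f 0 ≤ x}) ∪ ({ω | 0 < V ω} ∩ {ω | V ω ≤ cdfR μ f x})
      from hset]
  have hq : MeasurableSet {ω : Ω | qtl μ f 0 ≤ x} := MeasurableSet.const _
  exact ((hVm (measurableSet_singleton 0)).inter hq).union
    ((hVm measurableSet_Ioi).inter (hVm measurableSet_Iic))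

lemma unif_zero (hV : IsUnif μ V) : μ {ω | V ω = 0} = 0 := by
  have h1 : μ {ω | V ω ≤ 0} = 0 := by
    rw [hV.2.2.1 0 ⟨le_rfl, zero_le_one⟩]; simp
  exact measure_mono_null (fun ω (h : V ω = 0) => h.le) h1

lemma unif_one (hV : IsUnif μ V) : μ {ω | V ω = 1} = 0 := by
  have h1 : μ {ω | V ω ≤ 1} = 1 := by
    rw [hV.2.2.1 1 ⟨zero_le_one, le_rfl⟩, ENNReal.ofReal_one]
  have h2 : μ {ω | V ω < 1} = 1 := by
    rw [hV.2.2.2 1 ⟨zero_le_one, le_rfl⟩, ENNReal.ofReal_one]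
  have hsplit : {ω | V ω = 1} = {ω | V ω ≤ 1} \ {ω | V ω < 1} := by
    ext ω
    simp only [mem_setOf_eq, mem_diff, not_lt]
    constructor
    · intro h; exact ⟨h.le, h.ge⟩
    · intro ⟨ha, hb⟩; exact le_antisymm ha hb
  have hsub : {ω | V ω < 1} ⊆ {ω | V ω ≤ 1} :=
    setOf_subset_setOf.mpr fun ω h => le_of_lt h
  rw [hsplit, measure_diff hsub (hV.1 measurableSet_Iio).nullMeasurableSet
    (by rw [h2]; simp), h1, h2, tsub_self]

lemma unif_good (hV : IsUnif μ V) : ∀ᵐ ω ∂μ, 0 < V ω ∧ V ω < 1 := by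
  rw [ae_iff]
  have hz : μ ({ω | V ω = 0} ∪ {ω | V ω = 1}) = 0 :=
    le_antisymm ((measure_union_le _ _).trans
      (by rw [unif_zero hV, unif_one hV]; simp)) zero_le
  refine measure_mono_null (fun ω hω => ?_) hz
  show ω ∈ {ω | V ω = 0} ∪ {ω | V ω = 1}
  simp only [mem_setOf_eq, not_and_or, not_lt] at hω
  rcases hω with h | h
  · exact Or.inl (le_antisymm h (hV.2.1 ω).1)
  · exact Or.inr (le_antisymm (hV.2.1 ω).2 h)

lemma qtl_comp_cdf (hf : Measurable f) (hbd : ∀ᵐ ω ∂μ, f ω ∈ Icc a b) (hV : IsUnif μ V)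
    (x : ℝ) : μ {ω | qtl μ f (V ω) ≤ x} = μ {ω | f ω ≤ x} := by
  have hae : ∀ᵐ ω ∂μ, V ω ≠ 0 := by
    rw [ae_iff]
    refine measure_mono_null (fun ω hω => ?_) (unif_zero hV)
    simpa using hω
  have hsets : {ω | qtl μ f (V ω) ≤ x} =ᵐ[μ] {ω | V ω ≤ cdfR μ f x} := by
    filter_upwards [hae] with ω hω
    have h0 : 0 < V ω := lt_of_le_of_ne (hV.2.1 ω).1 (Ne.symm hω)
    simp only [eq_iff_iff, mem_setOf_eq]
    exact qtl_le_iff hf hbd h0 (hV.2.1 ω).2 x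
  rw [measure_congr hsets, hV.2.2.1 (cdfR μ f x) ⟨cdfR_nonneg _, cdfR_le_one _⟩, cdfR,
    ENNReal.ofReal_toReal (measure_ne_top μ _)]

lemma qtl_comp_map (hf : Measurable f) (hbd : ∀ᵐ ω ∂μ, f ω ∈ Icc a b) (hV : IsUnif μ V) :
    Measure.map (fun ω => qtl μ f (V ω)) μ = Measure.map f μ := by
  have hm : Measurable fun ω => qtl μ f (V ω) := qtl_comp_measurable hf hbd hV.1 hV.2.1
  haveI : IsProbabilityMeasure (Measure.map (fun ω => qtl μ f (V ω)) μ) :=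
    Measure.isProbabilityMeasure_map hm.aemeasurable
  haveI : IsProbabilityMeasure (Measure.map f μ) := Measure.isProbabilityMeasure_map hf.aemeasurable
  refine Measure.ext_of_Iic _ _ fun x => ?_
  rw [Measure.map_apply hm measurableSet_Iic, Measure.map_apply hf measurableSet_Iic]
  exact qtl_comp_cdf hf hbd hV x

lemma qtl_comp_antimono (hf : Measurable f) (hbd : ∀ᵐ ω ∂μ, f ω ∈ Icc a b) (hV : IsUnif μ V) :
    Antimonotonic μ (fun ω => qtl μ f (V ω)) (fun ω => qtl μ f (1 - V ω)) := by
  have key : ∀ u v : ℝ, 0 < u → u < 1 → 0 < v → v < 1 →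
      (qtl μ f u - qtl μ f v) * (qtl μ f (1 - u) - qtl μ f (1 - v)) ≤ 0 := by
    intro u v hu0 hu1 hv0 hv1
    rcases le_total u v with h | h
    · have h1 : qtl μ f u ≤ qtl μ f v := qtl_mono hf hbd hu0 hv1.le h
      have h2 : qtl μ f (1 - v) ≤ qtl μ f (1 - u) :=
        qtl_mono hf hbd (by linarith) (by linarith) (by linarith)
      exact mul_nonpos_iff.mpr (Or.inr ⟨by linarith, by linarith⟩)
    · have h1 : qtl μ f v ≤ qtl μ f u := qtl_mono hf hbd hv0 hu1.le h
      have h2 : qtl μ f (1 - u) ≤ qtl μ f (1 - v) :=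
        qtl_mono hf hbd (by linarith) (by linarith) (by linarith)
      exact mul_nonpos_iff.mpr (Or.inl ⟨by linarith, by linarith⟩)
  filter_upwards [ae_pair (unif_good hV)] with p hp
  exact key _ _ hp.1.1 hp.1.2 hp.2.1 hp.2.2

lemma integral_eq_of_map_eq {g h : Ω → ℝ} (hg : AEMeasurable g μ) (hh : AEMeasurable h μ)
    (heq : Measure.map g μ = Measure.map h μ) : ∫ ω, g ω ∂μ = ∫ ω, h ω ∂μ := by
  have h1 : ∫ ω, g ω ∂μ = ∫ y, id y ∂(Measure.map g μ) :=
    (integral_map hg aestronglyMeasurable_id).symm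
  have h2 : ∫ y, id y ∂(Measure.map h μ) = ∫ ω, h ω ∂μ :=
    integral_map hh aestronglyMeasurable_id
  rw [h1, heq, h2]

end Unif



lemma antimono_congr [IsProbabilityMeasure μ] {f g f' g' : Ω → ℝ} (hf : f =ᵐ[μ] f')
    (hg : g =ᵐ[μ] g') (h : Antimonotonic μ f g) : Antimonotonic μ f' g' := by
  filter_upwards [h, ae_pair (μ := μ) (hf.and hg)] with p hp hpp
  rw [← hpp.1.1, ← hpp.2.1, ← hpp.1.2, ← hpp.2.2]
  exact hp

lemma lp_top_ae_bound (X : Lp ℝ ∞ μ) : ∀ᵐ ω ∂μ, ‖(X : Ω → ℝ) ω‖ ≤ ‖X‖ := by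
  filter_upwards [enorm_ae_le_eLpNormEssSup (X : Ω → ℝ) μ] with ω hω
  have hfin : eLpNormEssSup (X : Ω → ℝ) μ ≠ ∞ := by
    rw [← eLpNorm_exponent_top]
    exact Lp.eLpNorm_ne_top X
  have h2 := ENNReal.toReal_mono hfin hω
  rw [toReal_enorm] at h2
  rwa [Lp.norm_def, eLpNorm_exponent_top]

end RiskAux
open Set

/-- On an atomless probability space, a risk preference
(transitive, law-invariant, `L^∞`-upper-semicontinuous relation on `L^∞`)
exhibiting diversification on antimonotonic and identically distributed pairs
exhibits weak risk aversion. -/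
theorem diversification_AM_ID_implies_weakRiskAverse
    {Ω : Type*} [MeasurableSpace Ω] (μ : Measure Ω) [IsProbabilityMeasure μ]
    (hatomless : Atomless μ)
    (R : Lp ℝ ∞ μ → Lp ℝ ∞ μ → Prop)
    (htrans : IsTrans' μ R) (hlaw : LawInvariant μ R) (husc : NormUSC μ R)
    (hdiv : DiversificationOn μ R (fun X Y =>
      Antimonotonic μ (X : Ω → ℝ) (Y : Ω → ℝ) ∧ SameDist μ (X : Ω → ℝ) (Y : Ω → ℝ))) :
    WeakRiskAverse μ R := by
  intro X
  classical
  obtain ⟨V, hVm, hV01, hVle, hVlt⟩ := RiskAux.exists_uniform hatomless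
  have hV : RiskAux.IsUnif μ V := ⟨hVm, hV01, hVle, hVlt⟩
  have hV' : RiskAux.IsUnif μ (fun ω => 1 - V ω) := RiskAux.IsUnif.one_sub hV
  have hgood := RiskAux.unif_good hV
  set B : ℝ := ‖X‖ with hB
  have hB0 : 0 ≤ B := norm_nonneg X
  set D : ℝ := 2 * B with hD
  set e : ℝ := ∫ ω, (X : Ω → ℝ) ω ∂μ with he
  set iterQ : (Ω → ℝ) → Ω → ℝ :=
    fun g ω => (RiskAux.qtl μ g (V ω) + RiskAux.qtl μ g (1 - V ω)) / 2 with hiter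
  set f : ℕ → Ω → ℝ := fun n => iterQ^[n] (X : Ω → ℝ) with hf
  have hf0 : f 0 = (X : Ω → ℝ) := rfl
  have hfs : ∀ n, f (n + 1) = iterQ (f n) := fun n => Function.iterate_succ_apply' _ _ _
  have hXm : Measurable (X : Ω → ℝ) := (Lp.stronglyMeasurable X).measurable
  have hXbd : ∀ᵐ ω ∂μ, (X : Ω → ℝ) ω ∈ Icc (-B) B := by
    filter_upwards [RiskAux.lp_top_ae_bound X] with ω hω
    rw [Real.norm_eq_abs] at hω
    have h2 := abs_le.mp hω
    exact ⟨h2.1, h2.2⟩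
  -- the invariant
  have hInv : ∀ n, Measurable (f n) ∧ (∀ᵐ ω ∂μ, f n ω ∈ Icc (-B) B) ∧
      (∃ a : ℝ, ∀ᵐ ω ∂μ, f n ω ∈ Icc a (a + D / 2 ^ n)) ∧ ∫ ω, f n ω ∂μ = e := by
    intro n
    induction n with
    | zero =>
      refine ⟨hXm, hXbd, ⟨-B, ?_⟩, by rw [hf0, he]⟩
      filter_upwards [hXbd] with ω h
      rw [mem_Icc] at h
      rw [hf0, mem_Icc, hD]
      constructor
      · linarith [h.1]
      · rw [pow_zero]
        linarith [h.2]
    | succ n ih =>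
      obtain ⟨hm, hb, ⟨a, ha⟩, hi⟩ := ih
      have hg1m : Measurable fun ω => RiskAux.qtl μ (f n) (V ω) :=
        RiskAux.qtl_comp_measurable hm hb hVm hV01
      have hg2m : Measurable fun ω => RiskAux.qtl μ (f n) (1 - V ω) :=
        RiskAux.qtl_comp_measurable hm hb hV'.1 hV'.2.1
      have hpow : (0:ℝ) < 2 ^ n := by positivity
      have hpows : (2:ℝ) ^ (n + 1) = 2 ^ n * 2 := pow_succ 2 n
      set c := RiskAux.qtl μ (f n) (1/2) with hc
      have hDpow : D / 2 ^ (n + 1) = (D / 2 ^ n) / 2 := by rw [hpows]; ring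
      have hptw : ∀ ω, 0 < V ω → V ω < 1 →
          f (n + 1) ω ∈ Icc ((a + c) / 2) ((a + c) / 2 + D / 2 ^ (n + 1)) ∧
          f (n + 1) ω ∈ Icc (-B) B := by
        intro ω h0 h1
        have hfv : f (n + 1) ω =
            (RiskAux.qtl μ (f n) (V ω) + RiskAux.qtl μ (f n) (1 - V ω)) / 2 := by
          rw [hfs n]
        have hu1 := RiskAux.qtl_mem_Icc hm ha h0 h1.le
        have hu2 := RiskAux.qtl_mem_Icc hm ha (by linarith : (0:ℝ) < 1 - V ω)
          (by linarith : 1 - V ω ≤ 1)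
        have hu1' := RiskAux.qtl_mem_Icc hm hb h0 h1.le
        have hu2' := RiskAux.qtl_mem_Icc hm hb (by linarith : (0:ℝ) < 1 - V ω)
          (by linarith : 1 - V ω ≤ 1)
        rw [mem_Icc] at hu1 hu2 hu1' hu2'
        rcases le_total (V ω) (1/2) with hh | hh
        · have hq1 : RiskAux.qtl μ (f n) (V ω) ≤ c :=
            RiskAux.qtl_mono hm hb h0 (by norm_num) hh
          have hq2 : c ≤ RiskAux.qtl μ (f n) (1 - V ω ) :=
            RiskAux.qtl_mono hm hb (by norm_num) (by linarith) (by linarith)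
          refine ⟨?_, ?_⟩ <;> rw [hfv, mem_Icc] <;> constructor <;>
            [skip; skip; skip; skip] <;> linarith [hu1.1, hu1.2, hu2.1, hu2.2,
              hu1'.1, hu1'.2, hu2'.1, hu2'.2, hDpow]
        · have hq1 : c ≤ RiskAux.qtl μ (f n) (V ω) :=
            RiskAux.qtl_mono hm hb (by norm_num) h1.le hh
          have hq2 : RiskAux.qtl μ (f n) (1 - V ω) ≤ c :=
            RiskAux.qtl_mono hm hb (by linarith) (by norm_num) (by linarith)
          refine ⟨?_, ?_⟩ <;> rw [hfv, mem_Icc] <;> constructor <;>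
            [skip; skip; skip; skip] <;> linarith [hu1.1, hu1.2, hu2.1, hu2.2,
              hu1'.1, hu1'.2, hu2'.1, hu2'.2, hDpow]
      have hbnew : ∀ᵐ ω ∂μ, f (n + 1) ω ∈ Icc (-B) B := by
        filter_upwards [hgood] with ω h
        exact (hptw ω h.1 h.2).2
      have hanew : ∀ᵐ ω ∂μ, f (n + 1) ω ∈ Icc ((a + c) / 2) ((a + c) / 2 + D / 2 ^ (n + 1)) := by
        filter_upwards [hgood] with ω h
        exact (hptw ω h.1 h.2).1
      have hmnew : Measurable (f (n + 1)) := by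
        rw [hfs n]
        exact (hg1m.add hg2m).div_const 2
      have hint1 : Integrable (fun ω => RiskAux.qtl μ (f n) (V ω)) μ := by
        refine (memLp_top_of_bound hg1m.aestronglyMeasurable B ?_).integrable le_top
        filter_upwards [hgood] with ω h
        have hq := RiskAux.qtl_mem_Icc hm hb h.1 h.2.le
        rw [Real.norm_eq_abs]
        exact abs_le.mpr ⟨hq.1, hq.2⟩
      have hint2 : Integrable (fun ω => RiskAux.qtl μ (f n) (1 - V ω)) μ := by
        refine (memLp_top_of_bound hg2m.aestronglyMeasurable B ?_).integrable le_top
        filter_upwards [hgood] with ω h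
        have hq := RiskAux.qtl_mem_Icc hm hb (by linarith [h.2] : (0:ℝ) < 1 - V ω)
          (by linarith [h.1] : 1 - V ω ≤ 1)
        rw [Real.norm_eq_abs]
        exact abs_le.mpr ⟨hq.1, hq.2⟩
      have hie1 : ∫ ω, RiskAux.qtl μ (f n) (V ω) ∂μ = ∫ ω, f n ω ∂μ :=
        RiskAux.integral_eq_of_map_eq hg1m.aemeasurable hm.aemeasurable
          (RiskAux.qtl_comp_map hm hb hV)
      have hie2 : ∫ ω, RiskAux.qtl μ (f n) (1 - V ω) ∂μ = ∫ ω, f n ω ∂μ :=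
        RiskAux.integral_eq_of_map_eq hg2m.aemeasurable hm.aemeasurable
          (RiskAux.qtl_comp_map hm hb hV')
      have hinew : ∫ ω, f (n + 1) ω ∂μ = e := by
        have hrw : ∀ ω, f (n + 1) ω =
            (RiskAux.qtl μ (f n) (V ω) + RiskAux.qtl μ (f n) (1 - V ω)) / 2 := by
          intro ω
          rw [hfs n]
        rw [integral_congr_ae (Eventually.of_forall hrw)]
        rw [integral_div, integral_add hint1 hint2, hie1, hie2, hi]
        linarith
      exact ⟨hmnew, hbnew, ⟨(a + c) / 2, hanew⟩, hinew⟩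
  -- the Lp elements
  have memA : ∀ n, MemLp (fun ω => RiskAux.qtl μ (f n) (V ω)) ∞ μ := by
    intro n
    obtain ⟨hm, hb, _, _⟩ := hInv n
    refine memLp_top_of_bound (RiskAux.qtl_comp_measurable hm hb hVm
      hV01).aestronglyMeasurable B ?_
    filter_upwards [hgood] with ω h
    have hq := RiskAux.qtl_mem_Icc hm hb h.1 h.2.le
    rw [Real.norm_eq_abs]
    exact abs_le.mpr ⟨hq.1, hq.2⟩
  have memBp : ∀ n, MemLp (fun ω => RiskAux.qtl μ (f n) (1 - V ω)) ∞ μ := by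
    intro n
    obtain ⟨hm, hb, _, _⟩ := hInv n
    refine memLp_top_of_bound (RiskAux.qtl_comp_measurable hm hb hV'.1
      hV'.2.1).aestronglyMeasurable B ?_
    filter_upwards [hgood] with ω h
    have hq := RiskAux.qtl_mem_Icc hm hb (by linarith [h.2] : (0:ℝ) < 1 - V ω)
      (by linarith [h.1] : 1 - V ω ≤ 1)
    rw [Real.norm_eq_abs]
    exact abs_le.mpr ⟨hq.1, hq.2⟩
  set A : ℕ → Lp ℝ ∞ μ := fun n => (memA n).toLp _ with hA
  set Bp : ℕ → Lp ℝ ∞ μ := fun n => (memBp n).toLp _ with hBpdef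
  have hAco : ∀ n, (A n : Ω → ℝ) =ᵐ[μ] fun ω => RiskAux.qtl μ (f n) (V ω) :=
    fun n => (memA n).coeFn_toLp
  have hBco : ∀ n, (Bp n : Ω → ℝ) =ᵐ[μ] fun ω => RiskAux.qtl μ (f n) (1 - V ω) :=
    fun n => (memBp n).coeFn_toLp
  have hmapA : ∀ n, Measure.map (A n : Ω → ℝ) μ = Measure.map (f n) μ := by
    intro n
    obtain ⟨hm, hb, _, _⟩ := hInv n
    calc Measure.map (A n : Ω → ℝ) μ
        = Measure.map (fun ω => RiskAux.qtl μ (f n) (V ω)) μ := Measure.map_congr (hAco n)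
      _ = Measure.map (f n) μ := RiskAux.qtl_comp_map hm hb hV
  have hmapB : ∀ n, Measure.map (Bp n : Ω → ℝ) μ = Measure.map (f n) μ := by
    intro n
    obtain ⟨hm, hb, _, _⟩ := hInv n
    calc Measure.map (Bp n : Ω → ℝ) μ
        = Measure.map (fun ω => RiskAux.qtl μ (f n) (1 - V ω)) μ := Measure.map_congr (hBco n)
      _ = Measure.map (f n) μ := RiskAux.qtl_comp_map hm hb hV'
  have hsd : ∀ n, SameDist μ (A n : Ω → ℝ) (Bp n : Ω → ℝ) := by
    intro n
    rw [SameDist, hmapA n, hmapB n]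
  have hanti : ∀ n, Antimonotonic μ (A n : Ω → ℝ) (Bp n : Ω → ℝ) := by
    intro n
    obtain ⟨hm, hb, _, _⟩ := hInv n
    exact RiskAux.antimono_congr (hAco n).symm (hBco n).symm
      (RiskAux.qtl_comp_antimono hm hb hV)
  set M : ℕ → Lp ℝ ∞ μ := fun n => (1/2 : ℝ) • A n + (1 - (1/2 : ℝ)) • Bp n with hMdef
  have hMR : ∀ n, R (M n) (Bp n) := by
    intro n
    have hlawAB := hlaw (A n) (Bp n) (hsd n)
    exact hdiv (A n) (Bp n) ⟨hanti n, hsd n⟩ hlawAB.1 hlawAB.2 (1/2) (by norm_num) (by norm_num)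
  have hMco : ∀ n, (M n : Ω → ℝ) =ᵐ[μ] f (n + 1) := by
    intro n
    have hMn : M n = (1/2 : ℝ) • A n + (1 - (1/2 : ℝ)) • Bp n := by rw [hMdef]
    filter_upwards [Lp.coeFn_add ((1/2 : ℝ) • A n) ((1 - (1/2 : ℝ)) • Bp n),
      Lp.coeFn_smul (1/2 : ℝ) (A n), Lp.coeFn_smul (1 - (1/2 : ℝ)) (Bp n),
      hAco n, hBco n] with ω e1 e2 e3 e4 e5
    have hfv : f (n + 1) ω =
        (RiskAux.qtl μ (f n) (V ω) + RiskAux.qtl μ (f n) (1 - V ω)) / 2 := by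
      rw [hfs n]
    rw [hMn]
    calc (((1/2 : ℝ) • A n + (1 - (1/2 : ℝ)) • Bp n : Lp ℝ ∞ μ) : Ω → ℝ) ω
        = (((1/2 : ℝ) • A n : Lp ℝ ∞ μ) : Ω → ℝ) ω
          + (((1 - (1/2 : ℝ)) • Bp n : Lp ℝ ∞ μ) : Ω → ℝ) ω := by
          rw [e1]; rfl
      _ = (1/2 : ℝ) * (A n : Ω → ℝ) ω + (1 - (1/2 : ℝ)) * (Bp n : Ω → ℝ) ω := by
          rw [e2, e3]; rfl
      _ = f (n + 1) ω := by
          rw [e4, e5, hfv]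
          ring
  have hmapM : ∀ n, Measure.map (M n : Ω → ℝ) μ = Measure.map (f (n + 1)) μ :=
    fun n => Measure.map_congr (hMco n)
  have hR : ∀ n, R (A n) X := by
    intro n
    induction n with
    | zero =>
      have h0 : SameDist μ (A 0 : Ω → ℝ) (X : Ω → ℝ) := by
        rw [SameDist, hmapA 0, hf0]
      exact (hlaw _ _ h0).1
    | succ n ih =>
      have hsdAM : SameDist μ (A (n + 1) : Ω → ℝ) (M n : Ω → ℝ) := by
        rw [SameDist, hmapA (n + 1), hmapM n]
      have h1 : R (A (n + 1)) (M n) := (hlaw _ _ hsdAM).1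
      have h3 : R (Bp n) (A n) := (hlaw _ _ (hsd n)).2
      exact htrans _ _ _ (htrans _ _ _ (htrans _ _ _ h1 (hMR n)) h3) ih
  -- convergence to the constant e
  have hdist : ∀ n, ‖A n - constLp μ e‖ ≤ D / 2 ^ n := by
    intro n
    obtain ⟨hm, hb, ⟨a, ha⟩, hi⟩ := hInv n
    have hintf : Integrable (f n) μ := by
      refine (memLp_top_of_bound hm.aestronglyMeasurable B ?_).integrable le_top
      filter_upwards [hb] with ω h
      rw [Real.norm_eq_abs]
      exact abs_le.mpr ⟨h.1, h.2⟩
    have hea : a ≤ e := by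
      rw [← hi]
      calc a = ∫ _ω, a ∂μ := by simp
        _ ≤ ∫ ω, f n ω ∂μ := integral_mono_ae (integrable_const a) hintf
            (ha.mono fun ω h => h.1)
    have heb : e ≤ a + D / 2 ^ n := by
      rw [← hi]
      calc ∫ ω, f n ω ∂μ ≤ ∫ _ω, (a + D / 2 ^ n) ∂μ :=
            integral_mono_ae hintf (integrable_const _) (ha.mono fun ω h => h.2)
        _ = a + D / 2 ^ n := by simp
    have hcoe : ((A n - constLp μ e : Lp ℝ ∞ μ) : Ω → ℝ) =ᵐ[μ]
        fun ω => RiskAux.qtl μ (f n) (V ω) - e := by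
      filter_upwards [Lp.coeFn_sub (A n) (constLp μ e), hAco n,
        (memLp_const e).coeFn_toLp (μ := μ)] with ω e1 e2 e3
      have e3' : (constLp μ e : Ω → ℝ) ω = e := e3
      rw [e1, Pi.sub_apply, e2, e3']
    have habs : ∀ᵐ ω ∂μ, ‖((A n - constLp μ e : Lp ℝ ∞ μ) : Ω → ℝ) ω‖ ≤ D / 2 ^ n := by
      filter_upwards [hcoe, hgood] with ω e1 h
      rw [e1]
      have hq := RiskAux.qtl_mem_Icc hm ha h.1 h.2.le
      rw [Real.norm_eq_abs]
      exact abs_le.mpr ⟨by linarith [hq.1, hq.2], by linarith [hq.1, hq.2]⟩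
    have hDn : (0:ℝ) ≤ D / 2 ^ n := by
      rw [hD]
      positivity
    have hnorm := Lp.norm_le_of_ae_bound hDn habs
    simpa [measureUnivNNReal, measure_univ] using hnorm
  have hDt : Tendsto (fun n : ℕ => D / 2 ^ n) atTop (nhds 0) := by
    have heqf : (fun n : ℕ => D / 2 ^ n) = fun n : ℕ => D * (1/2 : ℝ) ^ n := by
      funext n
      rw [div_pow, one_pow]
      ring
    rw [heqf]
    simpa using (tendsto_pow_atTop_nhds_zero_of_lt_one (by norm_num : (0:ℝ) ≤ 1/2)
      (by norm_num : (1:ℝ)/2 < 1)).const_mul D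
  have htendnorm : Tendsto (fun n => ‖A n - constLp μ e‖) atTop (nhds 0) :=
    squeeze_zero (fun n => norm_nonneg _) hdist hDt
  have htend : Tendsto A atTop (nhds (constLp μ e)) := by
    rw [tendsto_iff_norm_sub_tendsto_zero]
    exact htendnorm
  exact (husc X).mem_of_tendsto htend (Eventually.of_forall hR)
end

section
/- Let X and Y be essentially bounded random variables on a common probability space such that the pair (X,Y) is comonotonic. Then for every t ∈ (0,1), the left quantile function is additive: Q_{X+Y}(t) = Q_X(t) + Q_Y(t). Consequently, for every λ ∈ [0,1] and t ∈ (0,1), Q_{λX+(1−λ)Y}(t) = λQ_X(t) + (1−λ)Q_Y(t). -/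
open MeasureTheory ProbabilityTheory Filter
open scoped ENNReal

section AuxProof

open scoped Pointwise

variable {Ω : Type*} [MeasurableSpace Ω] {μ : Measure Ω} [IsProbabilityMeasure μ]

private lemma cq_mono {X : Ω → ℝ} {x y : ℝ} (hxy : x ≤ y) :
    (μ {ω | X ω ≤ x}).toReal ≤ (μ {ω | X ω ≤ y}).toReal :=
  ENNReal.toReal_mono (measure_ne_top μ _)
    (measure_mono fun ω h => le_trans h hxy)

private lemma memtop_bound {X : Ω → ℝ} (hX : MemLp X ∞ μ) :
    ∃ C : ℝ, ∀ᵐ ω ∂μ, |X ω| ≤ C := by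
  refine ⟨(eLpNorm X ∞ μ).toReal, ?_⟩
  filter_upwards [ae_le_eLpNormEssSup (f := X) (μ := μ)] with ω hω
  have h2 : eLpNormEssSup X μ ≠ ∞ := by
    rw [← eLpNorm_exponent_top]; exact hX.2.ne
  have : (‖X ω‖₊ : ℝ≥0∞).toReal ≤ (eLpNormEssSup X μ).toReal :=
    ENNReal.toReal_mono h2 hω
  rw [eLpNorm_exponent_top]
  simpa [Real.norm_eq_abs] using this

private lemma cq_nonempty {X : Ω → ℝ} {t C : ℝ} (ht : t ≤ 1)
    (hC : ∀ᵐ ω ∂μ, |X ω| ≤ C) :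
    C ∈ {x : ℝ | t ≤ (μ {ω | X ω ≤ x}).toReal} := by
  have hnull : μ {ω | ¬ |X ω| ≤ C} = 0 := ae_iff.mp hC
  have hsub : {ω | X ω ≤ C}ᶜ ⊆ {ω | ¬ |X ω| ≤ C} := by
    intro ω hω
    simp only [Set.mem_compl_iff, Set.mem_setOf_eq, not_le] at hω ⊢
    have := le_abs_self (X ω); linarith
  have hcnull : μ ({ω | X ω ≤ C}ᶜ) = 0 := measure_mono_null hsub hnull
  have h1 : μ {ω | X ω ≤ C} = 1 := by
    have hle := measure_union_le (μ := μ) {ω | X ω ≤ C} ({ω | X ω ≤ C}ᶜ)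
    rw [Set.union_compl_self, hcnull, add_zero, measure_univ] at hle
    exact le_antisymm prob_le_one hle
  simp only [Set.mem_setOf_eq, h1, ENNReal.toReal_one]
  exact ht

private lemma cq_bdd {X : Ω → ℝ} {t C : ℝ} (ht : 0 < t)
    (hC : ∀ᵐ ω ∂μ, |X ω| ≤ C) :
    BddBelow {x : ℝ | t ≤ (μ {ω | X ω ≤ x}).toReal} := by
  refine ⟨-C - 1, fun x hx => ?_⟩
  by_contra h
  push_neg at h
  have hnull : μ {ω | ¬ |X ω| ≤ C} = 0 := ae_iff.mp hC
  have hsub : {ω | X ω ≤ x} ⊆ {ω | ¬ |X ω| ≤ C} := by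
    intro ω hω
    simp only [Set.mem_setOf_eq, not_le] at hω ⊢
    have := neg_abs_le (X ω); linarith
  have h0 : μ {ω | X ω ≤ x} = 0 := measure_mono_null hsub hnull
  simp only [Set.mem_setOf_eq, h0, ENNReal.toReal_zero] at hx
  linarith

private lemma cq_lt {X : Ω → ℝ} {t C a : ℝ} (ht : 0 < t)
    (hC : ∀ᵐ ω ∂μ, |X ω| ≤ C) (ha : a < leftQuantile μ X t) :
    (μ {ω | X ω ≤ a}).toReal < t := by
  by_contra h
  push_neg at h
  have : leftQuantile μ X t ≤ a := csInf_le (cq_bdd ht hC) h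
  linarith

private lemma cq_ge {X : Ω → ℝ} {t C : ℝ} (ht0 : 0 < t) (ht1 : t ≤ 1)
    (hC : ∀ᵐ ω ∂μ, |X ω| ≤ C) {ε : ℝ} (hε : 0 < ε) :
    t ≤ (μ {ω | X ω ≤ leftQuantile μ X t + ε}).toReal := by
  have hne : {x : ℝ | t ≤ (μ {ω | X ω ≤ x}).toReal}.Nonempty :=
    ⟨C, cq_nonempty ht1 hC⟩
  have hlt : leftQuantile μ X t < leftQuantile μ X t + ε := by linarith
  obtain ⟨x, hx, hxlt⟩ := exists_lt_of_csInf_lt hne hlt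
  exact le_trans hx (cq_mono hxlt.le)

private lemma comono_dichotomy {X Y : Ω → ℝ} (hco : Comonotonic μ X Y) (a b : ℝ) :
    μ {ω | X ω ≤ a ∧ b < Y ω} = 0 ∨ μ {ω | a < X ω ∧ Y ω ≤ b} = 0 := by
  have hnull : (μ.prod μ)
      {p : Ω × Ω | ¬ 0 ≤ (X p.1 - X p.2) * (Y p.1 - Y p.2)} = 0 := ae_iff.mp hco
  have hsub : ({ω | X ω ≤ a ∧ b < Y ω} ×ˢ {ω | a < X ω ∧ Y ω ≤ b} : Set (Ω × Ω)) ⊆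
      {p : Ω × Ω | ¬ 0 ≤ (X p.1 - X p.2) * (Y p.1 - Y p.2)} := by
    rintro ⟨ω, ω'⟩ ⟨⟨h1, h2⟩, h3, h4⟩
    simp only [Set.mem_setOf_eq, not_le]
    exact mul_neg_of_neg_of_pos (by linarith) (by linarith)
  have hz := measure_mono_null hsub hnull
  rw [Measure.prod_prod] at hz
  exact mul_eq_zero.mp hz

private lemma quantile_add {X Y : Ω → ℝ} {CX CY : ℝ}
    (hCX : ∀ᵐ ω ∂μ, |X ω| ≤ CX) (hCY : ∀ᵐ ω ∂μ, |Y ω| ≤ CY)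
    (hco : Comonotonic μ X Y) {t : ℝ} (ht0 : 0 < t) (ht1 : t < 1) :
    leftQuantile μ (fun ω => X ω + Y ω) t
      = leftQuantile μ X t + leftQuantile μ Y t := by
  have hCS : ∀ᵐ ω ∂μ, |X ω + Y ω| ≤ CX + CY := by
    filter_upwards [hCX, hCY] with ω h1 h2
    calc |X ω + Y ω| ≤ |X ω| + |Y ω| := abs_add_le _ _
      _ ≤ CX + CY := add_le_add h1 h2
  set q := leftQuantile μ X t with hq
  set r := leftQuantile μ Y t with hr
  apply le_antisymm
  · -- Q_{X+Y}(t) ≤ q + r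
    refine le_of_forall_pos_le_add fun ε hε => ?_
    refine le_trans (csInf_le (cq_bdd ht0 hCS) ?_) le_rfl
    -- show q + r + ε ∈ the set for X + Y
    have hA : t ≤ (μ {ω | X ω ≤ q + ε / 2}).toReal := cq_ge ht0 ht1.le hCX (by linarith)
    have hB : t ≤ (μ {ω | Y ω ≤ r + ε / 2}).toReal := cq_ge ht0 ht1.le hCY (by linarith)
    have hinter : {ω | X ω ≤ q + ε / 2} ∩ {ω | Y ω ≤ r + ε / 2} ⊆
        {ω | X ω + Y ω ≤ q + r + ε} := by
      rintro ω ⟨h1, h2⟩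
      simp only [Set.mem_setOf_eq] at *
      linarith
    have key : t ≤ (μ ({ω | X ω ≤ q + ε / 2} ∩ {ω | Y ω ≤ r + ε / 2})).toReal := by
      rcases comono_dichotomy hco (q + ε / 2) (r + ε / 2) with h | h
      · -- μ {X ≤ a ∧ b < Y} = 0, so μ {X ≤ a} ≤ μ (∩)
        refine le_trans hA (ENNReal.toReal_mono (measure_ne_top μ _) ?_)
        have hsplit : {ω | X ω ≤ q + ε / 2} ⊆
            ({ω | X ω ≤ q + ε / 2} ∩ {ω | Y ω ≤ r + ε / 2}) ∪
              {ω | X ω ≤ q + ε / 2 ∧ r + ε / 2 < Y ω} := by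
          intro ω hω
          rcases le_or_gt (Y ω) (r + ε / 2) with hy | hy
          · exact Or.inl ⟨hω, hy⟩
          · exact Or.inr ⟨hω, hy⟩
        calc μ {ω | X ω ≤ q + ε / 2} ≤ _ := measure_mono hsplit
          _ ≤ μ ({ω | X ω ≤ q + ε / 2} ∩ {ω | Y ω ≤ r + ε / 2}) +
                μ {ω | X ω ≤ q + ε / 2 ∧ r + ε / 2 < Y ω} := measure_union_le _ _
          _ = μ ({ω | X ω ≤ q + ε / 2} ∩ {ω | Y ω ≤ r + ε / 2}) := by rw [h, add_zero]
      · refine le_trans hB (ENNReal.toReal_mono (measure_ne_top μ _) ?_)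
        have hsplit : {ω | Y ω ≤ r + ε / 2} ⊆
            ({ω | X ω ≤ q + ε / 2} ∩ {ω | Y ω ≤ r + ε / 2}) ∪
              {ω | q + ε / 2 < X ω ∧ Y ω ≤ r + ε / 2} := by
          intro ω hω
          rcases le_or_gt (X ω) (q + ε / 2) with hx | hx
          · exact Or.inl ⟨hx, hω⟩
          · exact Or.inr ⟨hx, hω⟩
        calc μ {ω | Y ω ≤ r + ε / 2} ≤ _ := measure_mono hsplit
          _ ≤ μ ({ω | X ω ≤ q + ε / 2} ∩ {ω | Y ω ≤ r + ε / 2}) +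
                μ {ω | q + ε / 2 < X ω ∧ Y ω ≤ r + ε / 2} := measure_union_le _ _
          _ = μ ({ω | X ω ≤ q + ε / 2} ∩ {ω | Y ω ≤ r + ε / 2}) := by rw [h, add_zero]
    exact le_trans key (ENNReal.toReal_mono (measure_ne_top μ _) (measure_mono hinter))
  · -- q + r ≤ Q_{X+Y}(t)
    refine le_csInf ⟨CX + CY, cq_nonempty ht1.le hCS⟩ fun x hx => ?_
    by_contra hcon
    push_neg at hcon
    set ε := (q + r - x) / 2 with hε
    have hεpos : 0 < ε := by simp only [hε]; linarith
    have hab : x = (q - ε) + (r - ε) := by simp only [hε]; ring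
    have hFa : (μ {ω | X ω ≤ q - ε}).toReal < t := cq_lt ht0 hCX (by linarith)
    have hFb : (μ {ω | Y ω ≤ r - ε}).toReal < t := cq_lt ht0 hCY (by linarith)
    rcases comono_dichotomy hco (q - ε) (r - ε) with h | h
    · -- μ {X ≤ a ∧ b < Y} = 0 : {S ≤ x} ⊆ {Y ≤ b} ∪ bad
      have hsub : {ω | X ω + Y ω ≤ x} ⊆
          {ω | Y ω ≤ r - ε} ∪ {ω | X ω ≤ q - ε ∧ r - ε < Y ω} := by
        intro ω hω
        simp only [Set.mem_setOf_eq] at hω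
        rcases le_or_gt (Y ω) (r - ε) with hy | hy
        · exact Or.inl hy
        · exact Or.inr ⟨by linarith, hy⟩
      have : (μ {ω | X ω + Y ω ≤ x}).toReal ≤ (μ {ω | Y ω ≤ r - ε}).toReal := by
        refine ENNReal.toReal_mono (measure_ne_top μ _) ?_
        calc μ {ω | X ω + Y ω ≤ x} ≤ _ := measure_mono hsub
          _ ≤ μ {ω | Y ω ≤ r - ε} + μ {ω | X ω ≤ q - ε ∧ r - ε < Y ω} :=
            measure_union_le _ _
          _ = μ {ω | Y ω ≤ r - ε} := by rw [h, add_zero]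
      have hxmem : t ≤ (μ {ω | X ω + Y ω ≤ x}).toReal := hx
      linarith
    · have hsub : {ω | X ω + Y ω ≤ x} ⊆
          {ω | X ω ≤ q - ε} ∪ {ω | q - ε < X ω ∧ Y ω ≤ r - ε} := by
        intro ω hω
        simp only [Set.mem_setOf_eq] at hω
        rcases le_or_gt (X ω) (q - ε) with hxx | hxx
        · exact Or.inl hxx
        · exact Or.inr ⟨hxx, by linarith⟩
      have : (μ {ω | X ω + Y ω ≤ x}).toReal ≤ (μ {ω | X ω ≤ q - ε}).toReal := by
        refine ENNReal.toReal_mono (measure_ne_top μ _) ?_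
        calc μ {ω | X ω + Y ω ≤ x} ≤ _ := measure_mono hsub
          _ ≤ μ {ω | X ω ≤ q - ε} + μ {ω | q - ε < X ω ∧ Y ω ≤ r - ε} :=
            measure_union_le _ _
          _ = μ {ω | X ω ≤ q - ε} := by rw [h, add_zero]
      have hxmem : t ≤ (μ {ω | X ω + Y ω ≤ x}).toReal := hx
      linarith

private lemma quantile_smul {X : Ω → ℝ} {c : ℝ} (hc : 0 < c) (t : ℝ) :
    leftQuantile μ (fun ω => c * X ω) t = c * leftQuantile μ X t := by
  unfold leftQuantile
  have hset : {x : ℝ | t ≤ (μ {ω | c * X ω ≤ x}).toReal}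
      = c • {x : ℝ | t ≤ (μ {ω | X ω ≤ x}).toReal} := by
    ext x
    rw [Set.mem_smul_set_iff_inv_smul_mem₀ hc.ne']
    simp only [Set.mem_setOf_eq, smul_eq_mul]
    have hseteq : {ω | X ω ≤ c⁻¹ * x} = {ω | c * X ω ≤ x} := by
      ext ω
      simp only [Set.mem_setOf_eq]
      rw [inv_mul_eq_div, le_div_iff₀ hc, mul_comm]
    rw [hseteq]
  rw [hset, Real.sInf_smul_of_nonneg hc.le, smul_eq_mul]

end AuxProof

/-- For a comonotonic pair of bounded random variables, the
left quantile function is additive, and consequently affine on convex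
combinations. -/
theorem leftQuantile_add_of_comonotonic
    {Ω : Type*} [MeasurableSpace Ω] (μ : Measure Ω) [IsProbabilityMeasure μ]
    (X Y : Ω → ℝ) (hX : MemLp X ∞ μ) (hY : MemLp Y ∞ μ)
    (hco : Comonotonic μ X Y) :
    (∀ t ∈ Set.Ioo (0 : ℝ) 1,
      leftQuantile μ (fun ω => X ω + Y ω) t = leftQuantile μ X t + leftQuantile μ Y t) ∧
    (∀ l : ℝ, 0 ≤ l → l ≤ 1 → ∀ t ∈ Set.Ioo (0 : ℝ) 1,
      leftQuantile μ (fun ω => l * X ω + (1 - l) * Y ω) t =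
        l * leftQuantile μ X t + (1 - l) * leftQuantile μ Y t) := by
  obtain ⟨CX, hCX⟩ := memtop_bound hX
  obtain ⟨CY, hCY⟩ := memtop_bound hY
  constructor
  · intro t ht
    exact quantile_add hCX hCY hco ht.1 ht.2
  · intro l hl0 hl1 t ht
    rcases eq_or_lt_of_le hl0 with h0 | h0
    · have hfun : (fun ω => l * X ω + (1 - l) * Y ω) = Y := by
        funext ω; rw [← h0]; ring
      rw [hfun, ← h0]; ring
    rcases eq_or_lt_of_le hl1 with h1 | h1
    · have hfun : (fun ω => l * X ω + (1 - l) * Y ω) = X := by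
        funext ω; rw [h1]; ring
      rw [hfun, h1]; ring
    · have hl1' : 0 < 1 - l := by linarith
      have hco' : Comonotonic μ (fun ω => l * X ω) (fun ω => (1 - l) * Y ω) := by
        filter_upwards [hco] with p hp
        have heq : (l * X p.1 - l * X p.2) * ((1 - l) * Y p.1 - (1 - l) * Y p.2)
            = l * (1 - l) * ((X p.1 - X p.2) * (Y p.1 - Y p.2)) := by ring
        rw [heq]
        exact mul_nonneg (mul_nonneg hl0 hl1'.le) hp
      have hClX : ∀ᵐ ω ∂μ, |l * X ω| ≤ l * CX := by
        filter_upwards [hCX] with ω hω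
        rw [abs_mul, abs_of_nonneg hl0]
        exact mul_le_mul_of_nonneg_left hω hl0
      have hClY : ∀ᵐ ω ∂μ, |(1 - l) * Y ω| ≤ (1 - l) * CY := by
        filter_upwards [hCY] with ω hω
        rw [abs_mul, abs_of_nonneg hl1'.le]
        exact mul_le_mul_of_nonneg_left hω hl1'.le
      have hadd := quantile_add hClX hClY hco' ht.1 ht.2
      rw [hadd, quantile_smul h0 t, quantile_smul hl1' t]
end

section
/- Let (Ω,𝓕,ℙ) be an atomless probability space, let g : (0,1) → ℝ be an increasing integrable function, and define 𝒰(X) = ∫₀¹ g(t) Q_X(t) dt for X ∈ L^∞. Then the binary relation ≿ on L^∞ defined by X ≿ Y iff 𝒰(X) ≥ 𝒰(Y) exhibits diversification on comonotonic pairs (indeed 𝒰 is affine on comonotonic pairs: 𝒰(λX+(1−λ)Y) = λ𝒰(X)+(1−λ)𝒰(Y) whenever (X,Y) is comonotonic and λ ∈ [0,1]) and exhibits strong risk seeking: X ≥_cv Y implies 𝒰(X) ≤ 𝒰(Y). In particular, diversification on comonotonic pairs does not imply weak risk aversion. -/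
open MeasureTheory ProbabilityTheory Filter
open scoped ENNReal

section AuxAll
open Set
set_option linter.unusedSectionVars false
set_option maxHeartbeats 1000000
section Aux
variable {Ω : Type*} [MeasurableSpace Ω] {μ : Measure Ω} [IsProbabilityMeasure μ]

/-- real-valued cdf -/
noncomputable def rcdf (μ : Measure Ω) (X : Ω → ℝ) (x : ℝ) : ℝ := (μ {ω | X ω ≤ x}).toReal

lemma measure_le_congr {X X' : Ω → ℝ} (h : X =ᵐ[μ] X') (x : ℝ) :
    μ {ω | X ω ≤ x} = μ {ω | X' ω ≤ x} := by
  refine measure_congr ?_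
  filter_upwards [h] with ω hω
  show (X ω ≤ x) = (X' ω ≤ x)
  rw [hω]

lemma rcdf_congr {X X' : Ω → ℝ} (h : X =ᵐ[μ] X') : rcdf μ X = rcdf μ X' := by
  funext x; unfold rcdf; rw [measure_le_congr h]

lemma leftQuantile_congr {X X' : Ω → ℝ} (h : X =ᵐ[μ] X') :
    leftQuantile μ X = leftQuantile μ X' := by
  funext t
  show sInf {x : ℝ | t ≤ (μ {ω | X ω ≤ x}).toReal} = _
  congr 1
  ext x
  simp only [Set.mem_setOf_eq]
  rw [measure_le_congr h]

lemma rcdf_mono (X : Ω → ℝ) : Monotone (rcdf μ X) := by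
  intro x y hxy
  exact ENNReal.toReal_mono (measure_ne_top _ _)
    (measure_mono (fun ω (h : X ω ≤ x) => h.trans hxy))

lemma rcdf_le_one (X : Ω → ℝ) (x : ℝ) : rcdf μ X x ≤ 1 := by
  unfold rcdf
  rw [show (1:ℝ) = (μ Set.univ).toReal by simp]
  exact ENNReal.toReal_mono (measure_ne_top _ _) (measure_mono (subset_univ _))

lemma rcdf_nonneg (X : Ω → ℝ) (x : ℝ) : 0 ≤ rcdf μ X x := ENNReal.toReal_nonneg

lemma rcdf_eq_one {X : Ω → ℝ} {C x : ℝ} (hC : ∀ᵐ ω ∂μ, |X ω| ≤ C) (hx : C ≤ x) :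
    rcdf μ X x = 1 := by
  unfold rcdf
  have : μ {ω | X ω ≤ x} = 1 := by
    rw [← measure_univ (μ := μ)]
    refine measure_congr ?_
    filter_upwards [hC] with ω hω
    simp only [eq_iff_iff, Set.mem_setOf_eq]
    exact iff_of_true ((abs_le.mp hω).2.trans hx) trivial
  rw [this]; simp

lemma rcdf_eq_zero {X : Ω → ℝ} {C x : ℝ} (hC : ∀ᵐ ω ∂μ, |X ω| ≤ C) (hx : x < -C) :
    rcdf μ X x = 0 := by
  unfold rcdf
  have : μ {ω | X ω ≤ x} = 0 := by
    refine measure_eq_zero_iff_ae_notMem.mpr ?_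
    filter_upwards [hC] with ω hω
    simp only [Set.mem_setOf_eq, not_le]
    linarith [(abs_le.mp hω).1]
  rw [this]; simp

/-- the set whose inf is the quantile -/
lemma quantile_set_bddBelow {X : Ω → ℝ} {C t : ℝ} (hC : ∀ᵐ ω ∂μ, |X ω| ≤ C) (ht : 0 < t) :
    BddBelow {x : ℝ | t ≤ rcdf μ X x} := by
  refine ⟨-C, fun x hx => ?_⟩
  by_contra h
  push_neg at h
  have h0 := rcdf_eq_zero hC h
  have hx' : t ≤ rcdf μ X x := hx
  rw [h0] at hx'
  linarith

lemma quantile_set_nonempty {X : Ω → ℝ} {C t : ℝ} (hC : ∀ᵐ ω ∂μ, |X ω| ≤ C) (ht : t ≤ 1) :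
    Set.Nonempty {x : ℝ | t ≤ rcdf μ X x} :=
  ⟨C, by simp only [Set.mem_setOf_eq, rcdf_eq_one hC le_rfl]; exact ht⟩

lemma leftQuantile_eq_sInf (X : Ω → ℝ) (t : ℝ) :
    leftQuantile μ X t = sInf {x : ℝ | t ≤ rcdf μ X x} := rfl

lemma leftQuantile_le_of_le {X : Ω → ℝ} {C t x : ℝ} (hC : ∀ᵐ ω ∂μ, |X ω| ≤ C) (ht : 0 < t)
    (h : t ≤ rcdf μ X x) : leftQuantile μ X t ≤ x :=
  csInf_le (quantile_set_bddBelow hC ht) h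

lemma rcdf_lt_of_lt_leftQuantile {X : Ω → ℝ} {C t x : ℝ} (hC : ∀ᵐ ω ∂μ, |X ω| ≤ C) (ht : 0 < t)
    (h : x < leftQuantile μ X t) : rcdf μ X x < t := by
  by_contra hc
  push_neg at hc
  exact absurd (leftQuantile_le_of_le hC ht hc) (not_le.mpr h)

lemma le_rcdf_of_forall_lt {X : Ω → ℝ} (hX : Measurable X) {t x : ℝ}
    (h : ∀ y, x < y → t ≤ rcdf μ X y) : t ≤ rcdf μ X x := by
  have hseq : Tendsto (fun n : ℕ => μ {ω | X ω ≤ x + 1/(n+1)}) atTop (nhds (μ {ω | X ω ≤ x})) := by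
    have hiInter : ⋂ n : ℕ, {ω | X ω ≤ x + 1/(n+1)} = {ω | X ω ≤ x} := by
      ext ω
      simp only [Set.mem_iInter, Set.mem_setOf_eq]
      constructor
      · intro hω
        by_contra hc
        push_neg at hc
        obtain ⟨n, hn⟩ := exists_nat_one_div_lt (sub_pos.mpr hc)
        exact absurd (hω n) (by push_cast; linarith [hn])
      · intro hω n
        have : (0:ℝ) < 1/(n+1) := by positivity
        linarith
    rw [← hiInter]
    refine tendsto_measure_iInter_atTop (fun n => (hX measurableSet_Iic).nullMeasurableSet) ?_ ⟨0, measure_ne_top _ _⟩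
    intro m n hmn
    refine fun ω (hω : X ω ≤ _) => le_trans hω ?_
    have h1 : ((m:ℝ)+1) ≤ ((n:ℝ)+1) := by push_cast; exact_mod_cast by omega
    have : (1:ℝ)/(n+1) ≤ 1/(m+1) := by
      apply div_le_div_of_nonneg_left (by norm_num) (by positivity) h1
    linarith
  have htoReal : Tendsto (fun n : ℕ => rcdf μ X (x + 1/(n+1))) atTop (nhds (rcdf μ X x)) :=
    (ENNReal.tendsto_toReal (measure_ne_top _ _)).comp hseq
  refine ge_of_tendsto htoReal (Eventually.of_forall fun n => h _ ?_)
  have : (0:ℝ) < 1/(n+1) := by positivity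
  linarith

lemma leftQuantile_le_iff {X : Ω → ℝ} {C t x : ℝ} (hX : Measurable X)
    (hC : ∀ᵐ ω ∂μ, |X ω| ≤ C) (ht : 0 < t) (ht1 : t ≤ 1) :
    leftQuantile μ X t ≤ x ↔ t ≤ rcdf μ X x := by
  constructor
  · intro h
    refine le_rcdf_of_forall_lt hX fun y hy => ?_
    obtain ⟨z, hz, hzy⟩ := exists_lt_of_csInf_lt (quantile_set_nonempty hC ht1) (lt_of_le_of_lt h hy)
    exact le_trans hz (rcdf_mono X hzy.le)
  · exact leftQuantile_le_of_le hC ht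

lemma le_rcdf_leftQuantile {X : Ω → ℝ} {C t : ℝ} (hX : Measurable X)
    (hC : ∀ᵐ ω ∂μ, |X ω| ≤ C) (ht : 0 < t) (ht1 : t ≤ 1) :
    t ≤ rcdf μ X (leftQuantile μ X t) :=
  (leftQuantile_le_iff hX hC ht ht1).mp le_rfl

lemma leftQuantile_mem_Icc {X : Ω → ℝ} {C t : ℝ} (hC : ∀ᵐ ω ∂μ, |X ω| ≤ C) (ht : 0 < t)
    (ht1 : t ≤ 1) : leftQuantile μ X t ∈ Set.Icc (-C) C := by
  constructor
  · refine le_csInf (quantile_set_nonempty hC ht1) fun x hx => ?_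
    by_contra h
    push_neg at h
    have hx' : t ≤ rcdf μ X x := hx
    rw [rcdf_eq_zero hC h] at hx'
    linarith
  · exact leftQuantile_le_of_le hC ht (by rw [rcdf_eq_one hC le_rfl]; exact ht1)

lemma leftQuantile_monotoneOn {X : Ω → ℝ} {C : ℝ} (hC : ∀ᵐ ω ∂μ, |X ω| ≤ C) :
    MonotoneOn (leftQuantile μ X) (Set.Ioc 0 1) := by
  intro t1 h1 t2 h2 h12
  refine csInf_le_csInf (quantile_set_bddBelow hC h1.1) (quantile_set_nonempty hC h2.2)
    fun x hx => le_trans h12 hx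

lemma comonotonic_nesting {X Y : Ω → ℝ} (hcom : Comonotonic μ X Y) (x y : ℝ) :
    μ ({ω | X ω ≤ x} \ {ω | Y ω ≤ y}) = 0 ∨ μ ({ω | Y ω ≤ y} \ {ω | X ω ≤ x}) = 0 := by
  have hnull : (μ.prod μ) {p : Ω × Ω | ¬ 0 ≤ (X p.1 - X p.2) * (Y p.1 - Y p.2)} = 0 :=
    hcom
  have hsub : ({ω | X ω ≤ x} \ {ω | Y ω ≤ y}) ×ˢ ({ω | Y ω ≤ y} \ {ω | X ω ≤ x}) ⊆
      {p : Ω × Ω | ¬ 0 ≤ (X p.1 - X p.2) * (Y p.1 - Y p.2)} := by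
    rintro ⟨ω1, ω2⟩ ⟨⟨h1x, h1y⟩, ⟨h2y, h2x⟩⟩
    simp only [Set.mem_setOf_eq, not_le] at h1y h2x ⊢
    have hX12 : X ω1 - X ω2 < 0 := by
      simp only [Set.mem_setOf_eq] at h1x; linarith
    have hY12 : 0 < Y ω1 - Y ω2 := by
      simp only [Set.mem_setOf_eq] at h2y; linarith
    exact mul_neg_of_neg_of_pos hX12 hY12
  have := measure_mono_null hsub hnull
  rw [Measure.prod_prod] at this
  exact mul_eq_zero.mp this

lemma rcdf_inter_ge {X Y : Ω → ℝ} (hcom : Comonotonic μ X Y) {x y t : ℝ}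
    (hx : t ≤ rcdf μ X x) (hy : t ≤ rcdf μ Y y) :
    t ≤ (μ ({ω | X ω ≤ x} ∩ {ω | Y ω ≤ y})).toReal := by
  rcases comonotonic_nesting hcom x y with h | h
  · -- μ (A \ B) = 0, so μ (A ∩ B) ≥ μ A
    refine le_trans hx (ENNReal.toReal_mono (measure_ne_top _ _) ?_)
    calc μ {ω | X ω ≤ x} ≤ μ (({ω | X ω ≤ x} ∩ {ω | Y ω ≤ y}) ∪ ({ω | X ω ≤ x} \ {ω | Y ω ≤ y})) :=
          measure_mono (fun ω hω => by by_cases hb : ω ∈ {ω | Y ω ≤ y}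
                                       · exact Or.inl ⟨hω, hb⟩
                                       · exact Or.inr ⟨hω, hb⟩)
      _ ≤ μ ({ω | X ω ≤ x} ∩ {ω | Y ω ≤ y}) + μ ({ω | X ω ≤ x} \ {ω | Y ω ≤ y}) := measure_union_le _ _
      _ = μ ({ω | X ω ≤ x} ∩ {ω | Y ω ≤ y}) := by rw [h, add_zero]
  · refine le_trans hy (ENNReal.toReal_mono (measure_ne_top _ _) ?_)
    calc μ {ω | Y ω ≤ y} ≤ μ (({ω | X ω ≤ x} ∩ {ω | Y ω ≤ y}) ∪ ({ω | Y ω ≤ y} \ {ω | X ω ≤ x})) :=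
          measure_mono (fun ω hω => by by_cases hb : ω ∈ {ω | X ω ≤ x}
                                       · exact Or.inl ⟨hb, hω⟩
                                       · exact Or.inr ⟨hω, hb⟩)
      _ ≤ μ ({ω | X ω ≤ x} ∩ {ω | Y ω ≤ y}) + μ ({ω | Y ω ≤ y} \ {ω | X ω ≤ x}) := measure_union_le _ _
      _ = μ ({ω | X ω ≤ x} ∩ {ω | Y ω ≤ y}) := by rw [h, add_zero]

lemma rcdf_union_le {X Y : Ω → ℝ} (hcom : Comonotonic μ X Y) (x y : ℝ) :
    (μ ({ω | X ω ≤ x} ∪ {ω | Y ω ≤ y})).toReal ≤ max (rcdf μ X x) (rcdf μ Y y) := by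
  rcases comonotonic_nesting hcom x y with h | h
  · refine le_trans (ENNReal.toReal_mono ?_ ?_) (le_max_right _ _)
    · exact measure_ne_top _ _
    · calc μ ({ω | X ω ≤ x} ∪ {ω | Y ω ≤ y})
            ≤ μ ({ω | Y ω ≤ y} ∪ ({ω | X ω ≤ x} \ {ω | Y ω ≤ y})) := by
              refine measure_mono fun ω hω => ?_
              rcases hω with hω | hω
              · by_cases hb : ω ∈ {ω | Y ω ≤ y}
                · exact Or.inl hb
                · exact Or.inr ⟨hω, hb⟩
              · exact Or.inl hω
        _ ≤ μ {ω | Y ω ≤ y} + μ ({ω | X ω ≤ x} \ {ω | Y ω ≤ y}) := measure_union_le _ _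
        _ = μ {ω | Y ω ≤ y} := by rw [h, add_zero]
  · refine le_trans (ENNReal.toReal_mono ?_ ?_) (le_max_left _ _)
    · exact measure_ne_top _ _
    · calc μ ({ω | X ω ≤ x} ∪ {ω | Y ω ≤ y})
            ≤ μ ({ω | X ω ≤ x} ∪ ({ω | Y ω ≤ y} \ {ω | X ω ≤ x})) := by
              refine measure_mono fun ω hω => ?_
              rcases hω with hω | hω
              · exact Or.inl hω
              · by_cases hb : ω ∈ {ω | X ω ≤ x}
                · exact Or.inl hb
                · exact Or.inr ⟨hω, hb⟩
        _ ≤ μ {ω | X ω ≤ x} + μ ({ω | Y ω ≤ y} \ {ω | X ω ≤ x}) := measure_union_le _ _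
        _ = μ {ω | X ω ≤ x} := by rw [h, add_zero]

lemma leftQuantile_add {X Y : Ω → ℝ} {CX CY : ℝ} (hX : Measurable X) (hY : Measurable Y)
    (hCX : ∀ᵐ ω ∂μ, |X ω| ≤ CX) (hCY : ∀ᵐ ω ∂μ, |Y ω| ≤ CY)
    (hcom : Comonotonic μ X Y) {t : ℝ} (ht : 0 < t) (ht1 : t ≤ 1) :
    leftQuantile μ (fun ω => X ω + Y ω) t = leftQuantile μ X t + leftQuantile μ Y t := by
  have hCZ : ∀ᵐ ω ∂μ, |X ω + Y ω| ≤ CX + CY := by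
    filter_upwards [hCX, hCY] with ω h1 h2
    calc |X ω + Y ω| ≤ |X ω| + |Y ω| := abs_add_le _ _
      _ ≤ CX + CY := add_le_add h1 h2
  have hZ : Measurable (fun ω => X ω + Y ω) := hX.add hY
  set a := leftQuantile μ X t with ha
  set b := leftQuantile μ Y t with hb
  refine le_antisymm ?_ ?_
  · refine leftQuantile_le_of_le hCZ ht ?_
    refine le_trans (rcdf_inter_ge hcom (le_rcdf_leftQuantile hX hCX ht ht1)
      (le_rcdf_leftQuantile hY hCY ht ht1)) ?_
    refine ENNReal.toReal_mono (measure_ne_top _ _) (measure_mono ?_)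
    rintro ω ⟨h1, h2⟩
    simp only [Set.mem_setOf_eq] at h1 h2 ⊢
    exact add_le_add h1 h2
  · refine le_csInf (quantile_set_nonempty hCZ ht1) fun s hs => ?_
    by_contra hcon
    push_neg at hcon
    set a' := a - (a + b - s)/2 with ha'
    set b' := b - (a + b - s)/2 with hb'
    have haa' : a' < a := by rw [ha']; linarith
    have hbb' : b' < b := by rw [hb']; linarith
    have hsum : a' + b' = s := by rw [ha', hb']; ring
    have hsub : {ω | X ω + Y ω ≤ s} ⊆ {ω | X ω ≤ a'} ∪ {ω | Y ω ≤ b'} := by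
      intro ω hω
      simp only [Set.mem_setOf_eq] at hω ⊢
      by_contra hc
      simp only [Set.mem_union, Set.mem_setOf_eq, not_or, not_le] at hc
      obtain ⟨h1, h2⟩ := hc
      linarith
    have hs' : t ≤ rcdf μ (fun ω => X ω + Y ω) s := hs
    have : rcdf μ (fun ω => X ω + Y ω) s ≤ max (rcdf μ X a') (rcdf μ Y b') := by
      refine le_trans ?_ (rcdf_union_le hcom a' b')
      exact ENNReal.toReal_mono (measure_ne_top _ _) (measure_mono hsub)
    have h1 : rcdf μ X a' < t := rcdf_lt_of_lt_leftQuantile hCX ht haa'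
    have h2 : rcdf μ Y b' < t := rcdf_lt_of_lt_leftQuantile hCY ht hbb'
    have := max_lt h1 h2
    linarith

lemma leftQuantile_const_mul {X : Ω → ℝ} {C c t : ℝ} (hX : Measurable X)
    (hC : ∀ᵐ ω ∂μ, |X ω| ≤ C) (hc : 0 < c) (ht : 0 < t) (ht1 : t ≤ 1) :
    leftQuantile μ (fun ω => c * X ω) t = c * leftQuantile μ X t := by
  have hcC : ∀ᵐ ω ∂μ, |c * X ω| ≤ c * C := by
    filter_upwards [hC] with ω hω
    rw [abs_mul, abs_of_pos hc]
    exact mul_le_mul_of_nonneg_left hω hc.le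
  have hset : ∀ x : ℝ, rcdf μ (fun ω => c * X ω) x = rcdf μ X (x / c) := by
    intro x
    unfold rcdf
    congr 2
    ext ω
    simp only [Set.mem_setOf_eq]
    rw [le_div_iff₀ hc, mul_comm]
  refine le_antisymm ?_ ?_
  · refine leftQuantile_le_of_le hcC ht ?_
    rw [hset, mul_comm, mul_div_assoc, div_self hc.ne', mul_one]
    exact le_rcdf_leftQuantile hX hC ht ht1
  · refine le_csInf (quantile_set_nonempty hcC ht1) fun s hs => ?_
    have hs' : t ≤ rcdf μ X (s / c) := by rw [← hset]; exact hs
    have := leftQuantile_le_of_le hC ht hs'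
    calc c * leftQuantile μ X t ≤ c * (s / c) := mul_le_mul_of_nonneg_left this hc.le
      _ = s := by field_simp

lemma leftQuantile_zero {t : ℝ} (ht : 0 < t) (ht1 : t ≤ 1) :
    leftQuantile μ (fun _ : Ω => (0:ℝ)) t = 0 := by
  have : {x : ℝ | t ≤ (μ {ω : Ω | (0:ℝ) ≤ x}).toReal} = Set.Ici 0 := by
    ext x
    simp only [Set.mem_setOf_eq, Set.mem_Ici]
    constructor
    · intro h
      by_contra hc
      push_neg at hc
      have : {ω : Ω | (0:ℝ) ≤ x} = ∅ := by
        ext ω; simp [not_le.mpr hc]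
      rw [this] at h
      simp at h
      linarith
    · intro h
      have : {ω : Ω | (0:ℝ) ≤ x} = Set.univ := by
        ext ω; simp [h]
      rw [this]
      simpa using ht1
  show sInf _ = (0:ℝ)
  rw [this, csInf_Ici]

lemma leftQuantile_aemeasurable {X : Ω → ℝ} {C : ℝ} (hC : ∀ᵐ ω ∂μ, |X ω| ≤ C) :
    AEMeasurable (leftQuantile μ X) (volume.restrict (Set.Ioo (0:ℝ) 1)) :=
  aemeasurable_restrict_of_monotoneOn measurableSet_Ioo
    ((leftQuantile_monotoneOn hC).mono Set.Ioo_subset_Ioc_self)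

lemma map_leftQuantile {X : Ω → ℝ} {C : ℝ} (hX : Measurable X) (hC : ∀ᵐ ω ∂μ, |X ω| ≤ C) :
    Measure.map (leftQuantile μ X) (volume.restrict (Set.Ioo (0:ℝ) 1)) = Measure.map X μ := by
  haveI hfin : IsFiniteMeasure (volume.restrict (Set.Ioo (0:ℝ) 1)) :=
    ⟨by rw [Measure.restrict_apply_univ]; simp⟩
  haveI : IsFiniteMeasure (Measure.map (leftQuantile μ X) (volume.restrict (Set.Ioo (0:ℝ) 1))) := by
    constructor
    rw [Measure.map_apply_of_aemeasurable (leftQuantile_aemeasurable hC) MeasurableSet.univ]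
    exact measure_lt_top _ _
  refine Measure.ext_of_Iic _ _ fun x => ?_
  set c := rcdf μ X x with hc
  have hc0 : 0 ≤ c := rcdf_nonneg X x
  have hc1 : c ≤ 1 := rcdf_le_one X x
  have hLHS : Measure.map (leftQuantile μ X) (volume.restrict (Set.Ioo (0:ℝ) 1)) (Set.Iic x)
      = volume (Set.Iic c ∩ Set.Ioo (0:ℝ) 1) := by
    rw [Measure.map_apply_of_aemeasurable (leftQuantile_aemeasurable hC) measurableSet_Iic,
      Measure.restrict_apply' measurableSet_Ioo]
    congr 1
    ext t
    simp only [Set.mem_inter_iff, Set.mem_preimage, Set.mem_Iic, Set.mem_Ioo, and_congr_left_iff]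
    intro htIoo
    rw [leftQuantile_le_iff hX hC htIoo.1 htIoo.2.le]
  have hvol : volume (Set.Iic c ∩ Set.Ioo (0:ℝ) 1) = ENNReal.ofReal c := by
    rcases lt_or_ge c 1 with h | h
    · have : Set.Iic c ∩ Set.Ioo (0:ℝ) 1 = Set.Ioc 0 c := by
        ext t
        simp only [Set.mem_inter_iff, Set.mem_Iic, Set.mem_Ioo, Set.mem_Ioc]
        constructor
        · rintro ⟨h1, h2, h3⟩; exact ⟨h2, h1⟩
        · rintro ⟨h1, h2⟩; exact ⟨h2, h1, lt_of_le_of_lt h2 h⟩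
      rw [this, Real.volume_Ioc, sub_zero]
    · have hceq : c = 1 := le_antisymm hc1 h
      have : Set.Iic c ∩ Set.Ioo (0:ℝ) 1 = Set.Ioo 0 1 := by
        rw [Set.inter_eq_self_of_subset_right]
        intro t ht
        exact le_trans ht.2.le (hceq ▸ le_rfl : (1:ℝ) ≤ c)
      rw [this, Real.volume_Ioo, sub_zero, hceq]
  have hRHS : Measure.map X μ (Set.Iic x) = ENNReal.ofReal c := by
    rw [Measure.map_apply hX measurableSet_Iic]
    have : X ⁻¹' Set.Iic x = {ω | X ω ≤ x} := rfl
    rw [this, hc]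
    exact (ENNReal.ofReal_toReal (measure_ne_top _ _)).symm
  rw [hLHS, hvol, hRHS]

lemma integral_quantile_transform {X : Ω → ℝ} {C : ℝ} (hX : Measurable X)
    (hC : ∀ᵐ ω ∂μ, |X ω| ≤ C) {φ : ℝ → ℝ} (hφ : Continuous φ) :
    ∫ t in Set.Ioo (0:ℝ) 1, φ (leftQuantile μ X t) = ∫ ω, φ (X ω) ∂μ := by
  have h1 : ∫ t in Set.Ioo (0:ℝ) 1, φ (leftQuantile μ X t)
      = ∫ y, φ y ∂(Measure.map (leftQuantile μ X) (volume.restrict (Set.Ioo (0:ℝ) 1))) :=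
    (integral_map (leftQuantile_aemeasurable hC) hφ.aestronglyMeasurable).symm
  have h2 : ∫ y, φ y ∂(Measure.map X μ) = ∫ ω, φ (X ω) ∂μ :=
    integral_map hX.aemeasurable hφ.aestronglyMeasurable
  rw [h1, map_leftQuantile hX hC, h2]

lemma bound_nonneg {X : Ω → ℝ} {C : ℝ} (hC : ∀ᵐ ω ∂μ, |X ω| ≤ C) : 0 ≤ C := by
  haveI : (ae μ).NeBot := ae_neBot.mpr (IsProbabilityMeasure.ne_zero μ)
  obtain ⟨ω, hω⟩ := hC.exists
  exact le_trans (abs_nonneg _) hω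

lemma integrableOn_of_bound {f : ℝ → ℝ} {s : Set ℝ} (hs : MeasurableSet s)
    (hvol : volume s ≠ ⊤) (hf : AEMeasurable f (volume.restrict s)) {M : ℝ}
    (hM : ∀ t ∈ s, |f t| ≤ M) : IntegrableOn f s := by
  refine Integrable.mono' (g := fun _ => M) ?_ hf.aestronglyMeasurable ?_
  · exact integrableOn_const hvol
  · filter_upwards [ae_restrict_mem hs] with t ht
    simpa using hM t ht

lemma quantile_integrableOn {X : Ω → ℝ} {C : ℝ} (hC : ∀ᵐ ω ∂μ, |X ω| ≤ C)
    {s : Set ℝ} (hsub : s ⊆ Set.Ioo 0 1) (hs : MeasurableSet s) :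
    IntegrableOn (leftQuantile μ X) s := by
  refine integrableOn_of_bound hs ?_ ?_ (M := C) ?_
  · exact ne_top_of_le_ne_top (by simp) (measure_mono hsub)
  · exact ((leftQuantile_aemeasurable hC).mono_measure
      (Measure.restrict_mono hsub le_rfl))
  · intro t ht
    have h := leftQuantile_mem_Icc hC (hsub ht).1 (hsub ht).2.le
    rw [abs_le]
    exact ⟨h.1, h.2⟩

lemma concaveOn_affine (a b : ℝ) : ConcaveOn ℝ Set.univ (fun x : ℝ => a * x + b) := by
  refine ⟨convex_univ, fun x _ y _ p q hp hq hpq => le_of_eq ?_⟩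
  simp only [smul_eq_mul]
  ring_nf
  linear_combination b * hpq

lemma concave_min_affine (a : ℝ) : ConcaveOn ℝ Set.univ (fun x : ℝ => min (x - a) 0) := by
  have h1 : ConcaveOn ℝ Set.univ (fun x : ℝ => x - a) := by
    have := concaveOn_affine 1 (-a)
    convert this using 1
    funext x; ring
  have h2 : ConcaveOn ℝ Set.univ (fun _ : ℝ => (0:ℝ)) := concaveOn_const 0 convex_univ
  exact h1.inf h2

lemma concave_ord_mean_eq {X Y : Ω → ℝ} (hord : ConcaveOrdGE μ X Y) :
    ∫ ω, X ω ∂μ = ∫ ω, Y ω ∂μ := by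
  have hid : ConcaveOn ℝ Set.univ (fun x : ℝ => x) := by
    have := concaveOn_affine 1 0
    convert this using 1
    funext x; ring
  have hneg : ConcaveOn ℝ Set.univ (fun x : ℝ => -x) := by
    have := concaveOn_affine (-1) 0
    convert this using 1
    funext x; ring
  have h1 := hord _ hid
  have h2 := hord _ hneg
  rw [integral_neg, integral_neg, neg_le_neg_iff] at h2
  exact le_antisymm h2 h1

lemma concave_ord_maxpart {X Y : Ω → ℝ} (hord : ConcaveOrdGE μ X Y) (a : ℝ) :
    ∫ ω, max (a - X ω) 0 ∂μ ≤ ∫ ω, max (a - Y ω) 0 ∂μ := by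
  have h := hord _ (concave_min_affine a)
  have hmin : ∀ x : ℝ, min (x - a) 0 = -(max (a - x) 0) := by
    intro x
    rcases le_total x a with h | h
    · rw [min_eq_left (by linarith), max_eq_left (by linarith)]; ring
    · rw [min_eq_right (by linarith), max_eq_right (by linarith)]; ring
  simp only [hmin] at h
  rw [integral_neg, integral_neg, neg_le_neg_iff] at h
  exact h

lemma partial_quantile_mono {X Y : Ω → ℝ} {CX CY : ℝ} (hX : Measurable X) (hY : Measurable Y)
    (hCX : ∀ᵐ ω ∂μ, |X ω| ≤ CX) (hCY : ∀ᵐ ω ∂μ, |Y ω| ≤ CY)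
    (hord : ConcaveOrdGE μ X Y) {s : ℝ} (hs : s ∈ Set.Ioo (0:ℝ) 1) :
    ∫ t in Set.Ioo 0 s, leftQuantile μ Y t ≤ ∫ t in Set.Ioo 0 s, leftQuantile μ X t := by
  set a := leftQuantile μ Y s with ha
  set QX := leftQuantile μ X with hQX
  set QY := leftQuantile μ Y with hQY
  have hsubs : Set.Ioo (0:ℝ) s ⊆ Set.Ioo 0 1 :=
    Set.Ioo_subset_Ioo le_rfl hs.2.le
  have hsubs' : Set.Ico s 1 ⊆ Set.Ioo 0 1 := fun t ht => ⟨lt_of_lt_of_le hs.1 ht.1, ht.2⟩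
  -- integrability
  have hQYint1 : IntegrableOn QY (Set.Ioo 0 1) := quantile_integrableOn hCY le_rfl.subset measurableSet_Ioo
  have hQXint1 : IntegrableOn QX (Set.Ioo 0 1) := quantile_integrableOn hCX le_rfl.subset measurableSet_Ioo
  have hQYints : IntegrableOn QY (Set.Ioo 0 s) := quantile_integrableOn hCY hsubs measurableSet_Ioo
  have hQXints : IntegrableOn QX (Set.Ioo 0 s) := quantile_integrableOn hCX hsubs measurableSet_Ioo
  have hmaxYint : ∀ u : Set ℝ, u ⊆ Set.Ioo 0 1 → MeasurableSet u →
      IntegrableOn (fun t => max (a - QY t) 0) u := by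
    intro u hu hum
    refine integrableOn_of_bound hum (ne_top_of_le_ne_top (by simp) (measure_mono hu)) ?_ (M := |a| + CY) ?_
    · exact (((leftQuantile_aemeasurable hCY).const_sub a).max aemeasurable_const).mono_measure
        (Measure.restrict_mono hu le_rfl)
    · intro t ht
      have h := leftQuantile_mem_Icc hCY (hu ht).1 (hu ht).2.le
      rw [abs_le]
      constructor
      · have : (0:ℝ) ≤ max (a - QY t) 0 := le_max_right _ _
        have hCY0 : 0 ≤ CY := bound_nonneg hCY
        have ha0 : 0 ≤ |a| := abs_nonneg a
        linarith
      · rcases le_total (a - QY t) 0 with hle | hle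
        · rw [max_eq_right hle]
          have hCY0 : 0 ≤ CY := bound_nonneg hCY
          have ha0 : 0 ≤ |a| := abs_nonneg a
          linarith
        · rw [max_eq_left hle]
          have h1 : a ≤ |a| := le_abs_self a
          have h2 : -CY ≤ QY t := h.1
          linarith
  have hmaxXint : ∀ u : Set ℝ, u ⊆ Set.Ioo 0 1 → MeasurableSet u →
      IntegrableOn (fun t => max (a - QX t) 0) u := by
    intro u hu hum
    refine integrableOn_of_bound hum (ne_top_of_le_ne_top (by simp) (measure_mono hu)) ?_ (M := |a| + CX) ?_
    · exact (((leftQuantile_aemeasurable hCX).const_sub a).max aemeasurable_const).mono_measure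
        (Measure.restrict_mono hu le_rfl)
    · intro t ht
      have h := leftQuantile_mem_Icc hCX (hu ht).1 (hu ht).2.le
      rw [abs_le]
      constructor
      · have : (0:ℝ) ≤ max (a - QX t) 0 := le_max_right _ _
        have hCX0 : 0 ≤ CX := bound_nonneg hCX
        have ha0 : 0 ≤ |a| := abs_nonneg a
        linarith
      · rcases le_total (a - QX t) 0 with hle | hle
        · rw [max_eq_right hle]
          have hCX0 : 0 ≤ CX := bound_nonneg hCX
          have ha0 : 0 ≤ |a| := abs_nonneg a
          linarith
        · rw [max_eq_left hle]
          have h1 : a ≤ |a| := le_abs_self a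
          have h2 : -CX ≤ QX t := h.1
          linarith
  -- step 1 : on Ioo 0 s, a - QY = max (a - QY) 0
  have h1 : ∫ t in Set.Ioo 0 s, (a - QY t) = ∫ t in Set.Ioo 0 s, max (a - QY t) 0 := by
    refine setIntegral_congr_fun measurableSet_Ioo fun t ht => ?_
    have hts : QY t ≤ a := by
      refine leftQuantile_monotoneOn hCY ⟨ht.1, le_trans ht.2.le hs.2.le⟩ ⟨hs.1, hs.2.le⟩ ht.2.le
    rw [max_eq_left (by linarith)]
  -- step 2 : split Ioo 0 1 = Ioo 0 s ∪ Ico s 1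
  have hsplit : ∫ t in Set.Ioo (0:ℝ) 1, max (a - QY t) 0
      = (∫ t in Set.Ioo 0 s, max (a - QY t) 0) + ∫ t in Set.Ico s 1, max (a - QY t) 0 := by
    rw [← Set.Ioo_union_Ico_eq_Ioo hs.1 hs.2.le]
    have hdisj : Disjoint (Set.Ioo (0:ℝ) s) (Set.Ico s 1) := by
      refine Set.disjoint_left.mpr fun t ht ht' => ?_
      exact absurd ht.2 (not_lt.mpr ht'.1)
    exact setIntegral_union hdisj measurableSet_Ico
      (hmaxYint _ hsubs measurableSet_Ioo) (hmaxYint _ hsubs' measurableSet_Ico)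
  -- step 3 : second piece vanishes
  have hzero : ∫ t in Set.Ico s 1, max (a - QY t) 0 = 0 := by
    have heq : ∫ t in Set.Ico s 1, max (a - QY t) 0 = ∫ _t in Set.Ico s 1, (0:ℝ) := by
      refine setIntegral_congr_fun measurableSet_Ico fun t ht => ?_
      have hts : a ≤ QY t :=
        leftQuantile_monotoneOn hCY ⟨hs.1, hs.2.le⟩ ⟨lt_of_lt_of_le hs.1 ht.1, ht.2.le⟩ ht.1
      rw [max_eq_right (by linarith)]
    rw [heq, integral_zero]
  -- step 4 : transform both
  have hcont : Continuous (fun x : ℝ => max (a - x) 0) :=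
    (continuous_const.sub continuous_id).max continuous_const
  have h4Y : ∫ t in Set.Ioo (0:ℝ) 1, max (a - QY t) 0 = ∫ ω, max (a - Y ω) 0 ∂μ :=
    integral_quantile_transform hY hCY hcont
  have h4X : ∫ t in Set.Ioo (0:ℝ) 1, max (a - QX t) 0 = ∫ ω, max (a - X ω) 0 ∂μ :=
    integral_quantile_transform hX hCX hcont
  have h5 := concave_ord_maxpart hord a
  -- step 6 : restrict X side
  have h6 : ∫ t in Set.Ioo 0 s, max (a - QX t) 0 ≤ ∫ t in Set.Ioo (0:ℝ) 1, max (a - QX t) 0 := by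
    refine setIntegral_mono_set (hmaxXint _ le_rfl.subset measurableSet_Ioo) ?_ ?_
    · filter_upwards with t using le_max_right _ _
    · exact HasSubset.Subset.eventuallyLE hsubs
  -- step 7 : pointwise bound on Ioo 0 s
  have h7 : ∫ t in Set.Ioo 0 s, (a - QX t) ≤ ∫ t in Set.Ioo 0 s, max (a - QX t) 0 := by
    refine setIntegral_mono_on ?_ (hmaxXint _ hsubs measurableSet_Ioo) measurableSet_Ioo ?_
    · refine Integrable.sub ?_ hQXints
      exact integrableOn_const (ne_top_of_le_ne_top (by simp) (measure_mono hsubs))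
    · intro t _
      exact le_max_left _ _
  -- combine
  have hconst : IntegrableOn (fun _ : ℝ => a) (Set.Ioo 0 s) :=
    integrableOn_const (ne_top_of_le_ne_top (by simp) (measure_mono hsubs))
  have hchain : ∫ t in Set.Ioo 0 s, (a - QX t) ≤ ∫ t in Set.Ioo 0 s, (a - QY t) := by
    calc ∫ t in Set.Ioo 0 s, (a - QX t) ≤ ∫ t in Set.Ioo 0 s, max (a - QX t) 0 := h7
      _ ≤ ∫ t in Set.Ioo (0:ℝ) 1, max (a - QX t) 0 := h6
      _ = ∫ ω, max (a - X ω) 0 ∂μ := h4X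
      _ ≤ ∫ ω, max (a - Y ω) 0 ∂μ := h5
      _ = ∫ t in Set.Ioo (0:ℝ) 1, max (a - QY t) 0 := h4Y.symm
      _ = (∫ t in Set.Ioo 0 s, max (a - QY t) 0) + ∫ t in Set.Ico s 1, max (a - QY t) 0 := hsplit
      _ = ∫ t in Set.Ioo 0 s, max (a - QY t) 0 := by rw [hzero, add_zero]
      _ = ∫ t in Set.Ioo 0 s, (a - QY t) := h1.symm
  have e1 : ∫ t in Set.Ioo 0 s, (a - QX t) = (∫ t in Set.Ioo 0 s, (fun _ => a) t) - ∫ t in Set.Ioo 0 s, QX t :=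
    integral_sub hconst hQXints
  have e2 : ∫ t in Set.Ioo 0 s, (a - QY t) = (∫ t in Set.Ioo 0 s, (fun _ => a) t) - ∫ t in Set.Ioo 0 s, QY t :=
    integral_sub hconst hQYints
  rw [e1, e2] at hchain
  linarith

end Aux

section Abel

lemma setIntegral_Ioo_split {D : ℝ → ℝ} (hD1 : IntegrableOn D (Set.Ioo 0 1)) {s : ℝ}
    (hs0 : 0 ≤ s) (hs1 : s ≤ 1) :
    ∫ t in Set.Ioo (0:ℝ) 1, D t = (∫ t in Set.Ioo 0 s, D t) + ∫ t in Set.Ioo s 1, D t := by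
  rcases eq_or_lt_of_le hs0 with rfl | hs0'
  · simp
  rcases eq_or_lt_of_le hs1 with rfl | hs1'
  · simp
  have hsub1 : Set.Ioo (0:ℝ) s ⊆ Set.Ioo 0 1 := Set.Ioo_subset_Ioo le_rfl hs1
  have hsub2 : Set.Ioo s 1 ⊆ Set.Ioo (0:ℝ) 1 := Set.Ioo_subset_Ioo hs0 le_rfl
  have hae : (Set.Ioo (0:ℝ) 0 ∪ Set.Ioo 0 1 : Set ℝ) = Set.Ioo 0 1 := by simp
  have haeset : (Set.Ioo (0:ℝ) s ∪ Set.Ioo s 1 : Set ℝ) =ᵐ[volume] (Set.Ioo (0:ℝ) 1 : Set ℝ) := by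
    rw [MeasureTheory.ae_eq_set]
    constructor
    · refine measure_mono_null ?_ (measure_empty (μ := volume))
      rintro t ⟨ht, ht'⟩
      rcases ht with h | h
      · exact absurd (hsub1 h) ht'
      · exact absurd (hsub2 h) ht'
    · refine measure_mono_null (fun t ht => ?_) (Real.volume_singleton (a := s))
      obtain ⟨⟨h0, h1⟩, hnot⟩ := ht
      simp only [Set.mem_union, Set.mem_Ioo, not_or, not_and_or, not_lt] at hnot
      obtain ⟨hA, hB⟩ := hnot
      have : t = s := by
        rcases hA with h | h
        · linarith
        · rcases hB with h' | h'
          · linarith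
          · linarith
      simp [this]
  have hdisj : Disjoint (Set.Ioo (0:ℝ) s) (Set.Ioo s 1) := by
    refine Set.disjoint_left.mpr fun t ht ht' => ?_
    exact absurd ht.2 (not_lt.mpr ht'.1.le)
  calc ∫ t in Set.Ioo (0:ℝ) 1, D t
      = ∫ t in Set.Ioo (0:ℝ) s ∪ Set.Ioo s 1, D t := by
        rw [Measure.restrict_congr_set haeset]
    _ = (∫ t in Set.Ioo 0 s, D t) + ∫ t in Set.Ioo s 1, D t :=
        setIntegral_union hdisj measurableSet_Ioo (hD1.mono_set hsub1) (hD1.mono_set hsub2)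

lemma exists_ae_Ioo_of_upper {U : Set ℝ} (hU : U ⊆ Set.Ioo 0 1)
    (hupper : ∀ t ∈ U, ∀ t', t' ∈ Set.Ioo (0:ℝ) 1 → t ≤ t' → t' ∈ U) :
    ∃ s, 0 ≤ s ∧ s ≤ 1 ∧ (U : Set ℝ) =ᵐ[volume] (Set.Ioo s 1 : Set ℝ) := by
  set s := sInf (insert 1 U) with hs
  have hbdd : BddBelow (insert (1:ℝ) U) := by
    refine ⟨0, ?_⟩
    rintro x (rfl | hx)
    · norm_num
    · exact (hU hx).1.le
  have hne : (insert (1:ℝ) U).Nonempty := ⟨1, Set.mem_insert _ _⟩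
  have hs0 : 0 ≤ s := le_csInf hne (by rintro x (rfl | hx); exacts [zero_le_one, (hU hx).1.le])
  have hs1 : s ≤ 1 := csInf_le hbdd (Set.mem_insert _ _)
  refine ⟨s, hs0, hs1, ?_⟩
  rw [MeasureTheory.ae_eq_set]
  constructor
  · refine measure_mono_null (fun t ht => ?_) (Real.volume_singleton (a := s))
    obtain ⟨htU, hnot⟩ := ht
    have h1 : t < 1 := (hU htU).2
    have h2 : s ≤ t := csInf_le hbdd (Set.mem_insert_of_mem _ htU)
    simp only [Set.mem_Ioo, not_and_or, not_lt] at hnot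
    have : t = s := by
      rcases hnot with h | h
      · linarith
      · linarith
    simp [this]
  · refine measure_mono_null (fun t ht => ?_) (measure_empty (μ := volume))
    obtain ⟨⟨hst, ht1⟩, hnotU⟩ := ht
    obtain ⟨u, hu, hut⟩ := exists_lt_of_csInf_lt hne hst
    rcases hu with rfl | hu
    · linarith
    · exact absurd (hupper u hu t ⟨lt_of_le_of_lt hs0 hst, ht1⟩ hut.le) hnotU

lemma exists_ae_Ioo_of_lower {L : Set ℝ} (hL : L ⊆ Set.Ioo 0 1)
    (hlower : ∀ t ∈ L, ∀ t', t' ∈ Set.Ioo (0:ℝ) 1 → t' ≤ t → t' ∈ L) :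
    ∃ s, 0 ≤ s ∧ s ≤ 1 ∧ (L : Set ℝ) =ᵐ[volume] (Set.Ioo 0 s : Set ℝ) := by
  set s := sSup (insert 0 L) with hs
  have hbdd : BddAbove (insert (0:ℝ) L) := by
    refine ⟨1, ?_⟩
    rintro x (rfl | hx)
    · norm_num
    · exact (hL hx).2.le
  have hne : (insert (0:ℝ) L).Nonempty := ⟨0, Set.mem_insert _ _⟩
  have hs1 : s ≤ 1 := csSup_le hne (by rintro x (rfl | hx); exacts [zero_le_one, (hL hx).2.le])
  have hs0 : 0 ≤ s := le_csSup hbdd (Set.mem_insert _ _)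
  refine ⟨s, hs0, hs1, ?_⟩
  rw [MeasureTheory.ae_eq_set]
  constructor
  · refine measure_mono_null (fun t ht => ?_) (Real.volume_singleton (a := s))
    obtain ⟨htL, hnot⟩ := ht
    have h1 : 0 < t := (hL htL).1
    have h2 : t ≤ s := le_csSup hbdd (Set.mem_insert_of_mem _ htL)
    simp only [Set.mem_Ioo, not_and_or, not_lt] at hnot
    have : t = s := by
      rcases hnot with h | h
      · linarith
      · linarith
    simp [this]
  · refine measure_mono_null (fun t ht => ?_) (measure_empty (μ := volume))
    obtain ⟨⟨ht0, hts⟩, hnotL⟩ := ht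
    obtain ⟨u, hu, hut⟩ := exists_lt_of_lt_csSup hne hts
    rcases hu with rfl | hu
    · linarith
    · exact absurd (hlower u hu t ⟨ht0, lt_of_lt_of_le hts hs1⟩ hut.le) hnotL

lemma integral_indicator_upper_nonpos {D : ℝ → ℝ} (hD1 : IntegrableOn D (Set.Ioo 0 1))
    (hG : ∀ s, 0 ≤ s → s ≤ 1 → 0 ≤ ∫ t in Set.Ioo 0 s, D t)
    (hG1 : ∫ t in Set.Ioo (0:ℝ) 1, D t = 0)
    {U : Set ℝ} (hU : U ⊆ Set.Ioo 0 1)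
    (hupper : ∀ t ∈ U, ∀ t', t' ∈ Set.Ioo (0:ℝ) 1 → t ≤ t' → t' ∈ U) :
    ∫ t in Set.Ioo (0:ℝ) 1, U.indicator D t ≤ 0 := by
  obtain ⟨s, hs0, hs1, hae⟩ := exists_ae_Ioo_of_upper hU hupper
  have hind : (U.indicator D : ℝ → ℝ) =ᵐ[volume.restrict (Set.Ioo (0:ℝ) 1)]
      (Set.Ioo s 1).indicator D :=
    ae_restrict_of_ae (indicator_ae_eq_of_ae_eq_set hae)
  rw [integral_congr_ae hind, setIntegral_indicator measurableSet_Ioo,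
    Set.inter_eq_self_of_subset_right (Set.Ioo_subset_Ioo hs0 le_rfl)]
  have := setIntegral_Ioo_split hD1 hs0 hs1
  have hGs := hG s hs0 hs1
  linarith

lemma integral_indicator_lower_nonneg {D : ℝ → ℝ} (hD1 : IntegrableOn D (Set.Ioo 0 1))
    (hG : ∀ s, 0 ≤ s → s ≤ 1 → 0 ≤ ∫ t in Set.Ioo 0 s, D t)
    {L : Set ℝ} (hL : L ⊆ Set.Ioo 0 1)
    (hlower : ∀ t ∈ L, ∀ t', t' ∈ Set.Ioo (0:ℝ) 1 → t' ≤ t → t' ∈ L) :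
    0 ≤ ∫ t in Set.Ioo (0:ℝ) 1, L.indicator D t := by
  obtain ⟨s, hs0, hs1, hae⟩ := exists_ae_Ioo_of_lower hL hlower
  have hind : (L.indicator D : ℝ → ℝ) =ᵐ[volume.restrict (Set.Ioo (0:ℝ) 1)]
      (Set.Ioo 0 s).indicator D :=
    ae_restrict_of_ae (indicator_ae_eq_of_ae_eq_set hae)
  rw [integral_congr_ae hind, setIntegral_indicator measurableSet_Ioo,
    Set.inter_eq_self_of_subset_right (Set.Ioo_subset_Ioo le_rfl hs1)]
  exact hG s hs0 hs1

end Abel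

section Key

lemma indicator_Ioc_integrable (a b : ℝ) :
    Integrable ((Set.Ioc a b).indicator (fun _ => (1:ℝ))) := by
  rw [integrable_indicator_iff measurableSet_Ioc]
  exact integrableOn_const (by rw [Real.volume_Ioc]; exact ENNReal.ofReal_ne_top)

lemma indicator_Ioc_integral (a b : ℝ) :
    ∫ c, (Set.Ioc a b).indicator (fun _ => (1:ℝ)) c = max (b - a) 0 := by
  rw [integral_indicator_const (1:ℝ) measurableSet_Ioc, measureReal_def, Real.volume_Ioc, smul_eq_mul, mul_one]
  rcases le_total (b - a) 0 with h | h
  · rw [ENNReal.ofReal_eq_zero.mpr h, max_eq_right h]; simp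
  · rw [ENNReal.toReal_ofReal h, max_eq_left h]

lemma max_sub_max_neg (G : ℝ) : max G 0 - max (-G) 0 = G := by
  rcases le_total G 0 with h | h
  · rw [max_eq_right h, max_eq_left (by linarith)]; ring
  · rw [max_eq_left h, max_eq_right (by linarith)]; ring

lemma max_add_max_neg (G : ℝ) : max G 0 + max (-G) 0 = |G| := by
  rcases le_total G 0 with h | h
  · rw [max_eq_right h, max_eq_left (by linarith), abs_of_nonpos h]; ring
  · rw [max_eq_left h, max_eq_right (by linarith), abs_of_nonneg h]; ring

lemma abel_summation_nonpos (g : ℝ → ℝ) (hg : MonotoneOn g (Set.Ioo 0 1))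
    (hgint : IntegrableOn g (Set.Ioo 0 1)) (D : ℝ → ℝ)
    (hDm : AEMeasurable D (volume.restrict (Set.Ioo 0 1))) {M : ℝ}
    (hDb : ∀ t ∈ Set.Ioo (0:ℝ) 1, |D t| ≤ M)
    (hG : ∀ s, 0 ≤ s → s ≤ 1 → 0 ≤ ∫ t in Set.Ioo 0 s, D t)
    (hG1 : ∫ t in Set.Ioo (0:ℝ) 1, D t = 0) :
    ∫ t in Set.Ioo (0:ℝ) 1, g t * D t ≤ 0 := by
  set ν := volume.restrict (Set.Ioo (0:ℝ) 1) with hν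
  have hgm : AEMeasurable g ν := aemeasurable_restrict_of_monotoneOn measurableSet_Ioo hg
  set g' := hgm.mk g with hg'def
  have hg'meas : Measurable g' := hgm.measurable_mk
  have hgeq : g =ᵐ[ν] g' := hgm.ae_eq_mk
  set D' := hDm.mk D with hD'def
  have hD'meas : Measurable D' := hDm.measurable_mk
  have hDeq : D =ᵐ[ν] D' := hDm.ae_eq_mk
  have hD1 : IntegrableOn D (Set.Ioo 0 1) :=
    integrableOn_of_bound measurableSet_Ioo (by simp) hDm hDb
  have hDb' : ∀ᵐ t ∂ν, |D' t| ≤ M := by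
    filter_upwards [hDeq.symm, ae_restrict_mem measurableSet_Ioo] with t h1 h2
    rw [h1]; exact hDb t h2
  have hg'int : Integrable g' ν := (hgint.congr hgeq)
  set f : ℝ → ℝ → ℝ := fun c t =>
    ((Set.Ioc (0:ℝ) (g' t)).indicator (fun _ => (1:ℝ)) c
      - (Set.Ioc (g' t) (0:ℝ)).indicator (fun _ => (1:ℝ)) c) * D' t with hfdef
  -- slice integral in c
  have hsliceA : ∀ t : ℝ, ∫ c, f c t = g' t * D' t := by
    intro t
    have : (fun c => f c t) = fun c =>
        ((Set.Ioc (0:ℝ) (g' t)).indicator (fun _ => (1:ℝ)) c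
          - (Set.Ioc (g' t) (0:ℝ)).indicator (fun _ => (1:ℝ)) c) * D' t := rfl
    rw [this, integral_mul_const, integral_sub (indicator_Ioc_integrable _ _) (indicator_Ioc_integrable _ _),
      indicator_Ioc_integral, indicator_Ioc_integral, sub_zero, zero_sub,
      max_sub_max_neg (g' t)]
  -- measurability on the product
  have hm1 : Measurable (fun p : ℝ × ℝ => (Set.Ioc (0:ℝ) (g' p.2)).indicator (fun _ => (1:ℝ)) p.1) := by
    have heq : (fun p : ℝ × ℝ => (Set.Ioc (0:ℝ) (g' p.2)).indicator (fun _ => (1:ℝ)) p.1)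
        = Set.indicator {p : ℝ × ℝ | 0 < p.1 ∧ p.1 ≤ g' p.2} (fun _ => (1:ℝ)) := by
      funext p
      simp [Set.indicator_apply, Set.mem_Ioc, Set.mem_setOf_eq]
    rw [heq]
    refine Measurable.indicator measurable_const ?_
    exact (measurableSet_lt measurable_const measurable_fst).inter
      (measurableSet_le measurable_fst (hg'meas.comp measurable_snd))
  have hm2 : Measurable (fun p : ℝ × ℝ => (Set.Ioc (g' p.2) (0:ℝ)).indicator (fun _ => (1:ℝ)) p.1) := by
    have heq : (fun p : ℝ × ℝ => (Set.Ioc (g' p.2) (0:ℝ)).indicator (fun _ => (1:ℝ)) p.1)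
        = Set.indicator {p : ℝ × ℝ | g' p.2 < p.1 ∧ p.1 ≤ 0} (fun _ => (1:ℝ)) := by
      funext p
      simp [Set.indicator_apply, Set.mem_Ioc, Set.mem_setOf_eq]
    rw [heq]
    refine Measurable.indicator measurable_const ?_
    exact (measurableSet_lt (hg'meas.comp measurable_snd) measurable_fst).inter
      (measurableSet_le measurable_fst measurable_const)
  have hfmeas : Measurable (Function.uncurry f) :=
    ((hm1.sub hm2).mul (hD'meas.comp measurable_snd))
  -- norm slice
  have hsliceN : ∀ t : ℝ, ∫ c, ‖f c t‖ = |g' t| * |D' t| := by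
    intro t
    have habs : (fun c => ‖f c t‖) = fun c =>
        ((Set.Ioc (0:ℝ) (g' t)).indicator (fun _ => (1:ℝ)) c
          + (Set.Ioc (g' t) (0:ℝ)).indicator (fun _ => (1:ℝ)) c) * |D' t| := by
      funext c
      rw [Real.norm_eq_abs, hfdef]
      simp only [abs_mul]
      congr 1
      by_cases hc1 : c ∈ Set.Ioc (0:ℝ) (g' t) <;> by_cases hc2 : c ∈ Set.Ioc (g' t) (0:ℝ)
      · exact absurd hc2.2 (not_le.mpr hc1.1)
      · simp [Set.indicator_of_mem hc1, Set.indicator_of_notMem hc2]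
      · simp [Set.indicator_of_notMem hc1, Set.indicator_of_mem hc2]
      · simp [Set.indicator_of_notMem hc1, Set.indicator_of_notMem hc2]
    rw [habs, integral_mul_const, integral_add (indicator_Ioc_integrable _ _) (indicator_Ioc_integrable _ _),
      indicator_Ioc_integral, indicator_Ioc_integral, sub_zero, zero_sub,
      max_add_max_neg (g' t)]
  -- product integrability
  have hfint : Integrable (Function.uncurry f) (Measure.prod volume ν) := by
    refine (integrable_prod_iff' hfmeas.aestronglyMeasurable).mpr ⟨?_, ?_⟩
    · refine Eventually.of_forall fun t => ?_
      have := ((indicator_Ioc_integrable 0 (g' t)).sub (indicator_Ioc_integrable (g' t) 0)).mul_const (D' t)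
      exact this
    · show Integrable (fun t => ∫ c, ‖f c t‖) ν
      have : (fun t => ∫ c, ‖f c t‖) = fun t => |g' t| * |D' t| := funext hsliceN
      rw [this]
      refine Integrable.mono' (g := fun t => M * |g' t|) (hg'int.abs.const_mul M)
        (hg'meas.abs.mul hD'meas.abs).aestronglyMeasurable ?_
      filter_upwards [hDb'] with t ht
      rw [Real.norm_eq_abs, abs_of_nonneg (by positivity)]
      calc |g' t| * |D' t| ≤ |g' t| * M := by
            refine mul_le_mul_of_nonneg_left ht (abs_nonneg _)
        _ = M * |g' t| := mul_comm _ _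
  -- outer nonpositivity
  have houter : ∀ c : ℝ, ∫ t, f c t ∂ν ≤ 0 := by
    intro c
    have hae_ct : (fun t => f c t) =ᵐ[ν] fun t =>
        ((Set.Ioc (0:ℝ) (g t)).indicator (fun _ => (1:ℝ)) c
          - (Set.Ioc (g t) (0:ℝ)).indicator (fun _ => (1:ℝ)) c) * D t := by
      filter_upwards [hgeq, hDeq] with t h1 h2
      rw [hfdef]
      simp only [h1, h2]
    rw [integral_congr_ae hae_ct]
    rcases lt_or_ge 0 c with hc | hc
    · set U : Set ℝ := {t | t ∈ Set.Ioo (0:ℝ) 1 ∧ c ≤ g t} with hU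
      have hEq : Set.EqOn (fun t =>
          ((Set.Ioc (0:ℝ) (g t)).indicator (fun _ => (1:ℝ)) c
            - (Set.Ioc (g t) (0:ℝ)).indicator (fun _ => (1:ℝ)) c) * D t)
          (U.indicator D) (Set.Ioo 0 1) := by
        intro t ht
        have h2 : (Set.Ioc (g t) (0:ℝ)).indicator (fun _ => (1:ℝ)) c = 0 :=
          Set.indicator_of_notMem (fun h => absurd h.2 (not_le.mpr hc)) _
        by_cases hcg : c ≤ g t
        · have h1 : (Set.Ioc (0:ℝ) (g t)).indicator (fun _ => (1:ℝ)) c = 1 :=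
            Set.indicator_of_mem (Set.mem_Ioc.mpr ⟨hc, hcg⟩) _
          have hmem : t ∈ U := by rw [hU]; exact ⟨ht, hcg⟩
          simp [h1, h2, Set.indicator_of_mem hmem]
        · have h1 : (Set.Ioc (0:ℝ) (g t)).indicator (fun _ => (1:ℝ)) c = 0 :=
            Set.indicator_of_notMem (fun h => absurd h.2 hcg) _
          have hmem : t ∉ U := fun h => hcg h.2
          simp [h1, h2, Set.indicator_of_notMem hmem]
      rw [hν, setIntegral_congr_fun measurableSet_Ioo hEq]
      refine integral_indicator_upper_nonpos hD1 hG hG1 (fun t ht => ht.1) ?_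
      rintro t ht t' ht' htt'
      have htm : t ∈ Set.Ioo (0:ℝ) 1 ∧ c ≤ g t := ht
      show t' ∈ Set.Ioo (0:ℝ) 1 ∧ c ≤ g t'
      exact ⟨ht', le_trans htm.2 (hg htm.1 ht' htt')⟩
    · set L : Set ℝ := {t | t ∈ Set.Ioo (0:ℝ) 1 ∧ g t < c} with hL
      have hEq : Set.EqOn (fun t =>
          ((Set.Ioc (0:ℝ) (g t)).indicator (fun _ => (1:ℝ)) c
            - (Set.Ioc (g t) (0:ℝ)).indicator (fun _ => (1:ℝ)) c) * D t)
          (fun t => -(L.indicator D t)) (Set.Ioo 0 1) := by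
        intro t ht
        have h1 : (Set.Ioc (0:ℝ) (g t)).indicator (fun _ => (1:ℝ)) c = 0 :=
          Set.indicator_of_notMem (fun h => absurd h.1 (not_lt.mpr hc)) _
        by_cases hcg : g t < c
        · have h2 : (Set.Ioc (g t) (0:ℝ)).indicator (fun _ => (1:ℝ)) c = 1 :=
            Set.indicator_of_mem (Set.mem_Ioc.mpr ⟨hcg, hc⟩) _
          have hmem : t ∈ L := by rw [hL]; exact ⟨ht, hcg⟩
          simp [h1, h2, Set.indicator_of_mem hmem]
        · have h2 : (Set.Ioc (g t) (0:ℝ)).indicator (fun _ => (1:ℝ)) c = 0 :=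
            Set.indicator_of_notMem (fun h => absurd h.1 hcg) _
          have hmem : t ∉ L := fun h => hcg h.2
          simp [h1, h2, Set.indicator_of_notMem hmem]
      rw [hν, setIntegral_congr_fun measurableSet_Ioo hEq, integral_neg, neg_nonpos]
      refine integral_indicator_lower_nonneg hD1 hG (fun t ht => ht.1) ?_
      rintro t ht t' ht' htt'
      have htm : t ∈ Set.Ioo (0:ℝ) 1 ∧ g t < c := ht
      show t' ∈ Set.Ioo (0:ℝ) 1 ∧ g t' < c
      exact ⟨ht', lt_of_le_of_lt (hg ht' htm.1 htt') htm.2⟩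
  -- assemble
  have hfinal : ∫ t in Set.Ioo (0:ℝ) 1, g t * D t = ∫ c, ∫ t, f c t ∂ν := by
    have h1 : ∫ t in Set.Ioo (0:ℝ) 1, g t * D t = ∫ t, g' t * D' t ∂ν := by
      refine integral_congr_ae ?_
      filter_upwards [hgeq, hDeq] with t e1 e2
      rw [e1, e2]
    have h2 : ∫ t, g' t * D' t ∂ν = ∫ t, (∫ c, f c t) ∂ν := by
      refine integral_congr_ae (Eventually.of_forall fun t => ?_)
      exact (hsliceA t).symm
    rw [h1, h2, ← integral_integral_swap hfint]
  rw [hfinal]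
  exact integral_nonpos houter

end Key

section Main
variable {Ω : Type*} [MeasurableSpace Ω] {μ : Measure Ω} [IsProbabilityMeasure μ]

lemma memLinfty_setup {X : Ω → ℝ} (hX : MemLp X ∞ μ) :
    ∃ X' : Ω → ℝ, Measurable X' ∧ X =ᵐ[μ] X' ∧ ∃ C : ℝ, 0 ≤ C ∧ (∀ᵐ ω ∂μ, |X' ω| ≤ C) := by
  obtain ⟨hmeas, hfin⟩ := hX
  refine ⟨hmeas.mk X, hmeas.stronglyMeasurable_mk.measurable, hmeas.ae_eq_mk, ?_⟩
  set C := (eLpNorm X ∞ μ).toReal with hC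
  have hfin' : eLpNorm X ∞ μ ≠ ⊤ := hfin.ne
  have hbound : ∀ᵐ ω ∂μ, |X ω| ≤ C := by
    have h := ae_le_eLpNormEssSup (f := X) (μ := μ)
    filter_upwards [h] with ω hω
    have h2 : ((‖X ω‖₊ : ℝ≥0∞)).toReal ≤ C := by
      refine ENNReal.toReal_mono hfin' ?_
      rwa [eLpNorm_exponent_top]
    simpa [Real.norm_eq_abs] using h2
  refine ⟨C, ENNReal.toReal_nonneg, ?_⟩
  filter_upwards [hbound, hmeas.ae_eq_mk] with ω h1 h2
  rwa [← h2]

lemma ae_prod_fst {P : Ω → Prop} (h : ∀ᵐ ω ∂μ, P ω) : ∀ᵐ p ∂(μ.prod μ), P p.1 := by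
  have hmap : (μ.prod μ).map Prod.fst = μ := by
    rw [Measure.map_fst_prod]; simp
  rw [← hmap] at h
  exact ae_of_ae_map measurable_fst.aemeasurable h

lemma ae_prod_snd {P : Ω → Prop} (h : ∀ᵐ ω ∂μ, P ω) : ∀ᵐ p ∂(μ.prod μ), P p.2 := by
  have hmap : (μ.prod μ).map Prod.snd = μ := by
    rw [Measure.map_snd_prod]; simp
  rw [← hmap] at h
  exact ae_of_ae_map measurable_snd.aemeasurable h

lemma comonotonic_congr {X X' Y Y' : Ω → ℝ} (hX : X =ᵐ[μ] X') (hY : Y =ᵐ[μ] Y')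
    (h : Comonotonic μ X Y) : Comonotonic μ X' Y' := by
  filter_upwards [h, ae_prod_fst hX, ae_prod_snd hX, ae_prod_fst hY, ae_prod_snd hY]
    with p hp h1 h2 h3 h4
  rw [← h1, ← h2, ← h3, ← h4]
  exact hp

lemma comonotonic_smul {X Y : Ω → ℝ} (h : Comonotonic μ X Y) {a b : ℝ} (ha : 0 ≤ a)
    (hb : 0 ≤ b) : Comonotonic μ (fun ω => a * X ω) (fun ω => b * Y ω) := by
  filter_upwards [h] with p hp
  have heq : (a * X p.1 - a * X p.2) * (b * Y p.1 - b * Y p.2)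
      = (a * b) * ((X p.1 - X p.2) * (Y p.1 - Y p.2)) := by ring
  rw [heq]
  exact mul_nonneg (mul_nonneg ha hb) hp

lemma gQ_integrable {g : ℝ → ℝ} (hg : MonotoneOn g (Set.Ioo (0 : ℝ) 1))
    (hgint : IntegrableOn g (Set.Ioo (0 : ℝ) 1)) {X : Ω → ℝ} {C : ℝ}
    (hC : ∀ᵐ ω ∂μ, |X ω| ≤ C) :
    IntegrableOn (fun t => g t * leftQuantile μ X t) (Set.Ioo (0:ℝ) 1) := by
  refine Integrable.mono' (g := fun t => C * |g t|) (hgint.abs.const_mul C) ?_ ?_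
  · exact ((aemeasurable_restrict_of_monotoneOn measurableSet_Ioo hg).mul
      (leftQuantile_aemeasurable hC)).aestronglyMeasurable
  · filter_upwards [ae_restrict_mem measurableSet_Ioo] with t ht
    rw [Real.norm_eq_abs, abs_mul]
    have h := leftQuantile_mem_Icc hC ht.1 ht.2.le
    have habs : |leftQuantile μ X t| ≤ C := abs_le.mpr ⟨h.1, h.2⟩
    calc |g t| * |leftQuantile μ X t| ≤ |g t| * C :=
          mul_le_mul_of_nonneg_left habs (abs_nonneg _)
      _ = C * |g t| := mul_comm _ _

lemma concaveOrdGE_congr {X X' Y Y' : Ω → ℝ} (hX : X =ᵐ[μ] X') (hY : Y =ᵐ[μ] Y')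
    (h : ConcaveOrdGE μ X Y) : ConcaveOrdGE μ X' Y' := by
  intro u hu
  have e1 : ∫ ω, u (Y' ω) ∂μ = ∫ ω, u (Y ω) ∂μ := by
    refine integral_congr_ae ?_
    filter_upwards [hY] with ω hω
    rw [hω]
  have e2 : ∫ ω, u (X' ω) ∂μ = ∫ ω, u (X ω) ∂μ := by
    refine integral_congr_ae ?_
    filter_upwards [hX] with ω hω
    rw [hω]
  rw [e1, e2]
  exact h u hu

end Main

end AuxAll
/-- The dual utility `𝒰(X) = ∫₀¹ g(t) Q_X(t) dt` with `g`
increasing and integrable is affine on comonotonic pairs (hence the induced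
preference exhibits diversification on comonotonic pairs) and exhibits strong
risk seeking. -/
theorem dualUtility_comonotonic_affine_and_strongRiskSeeking
    {Ω : Type*} [MeasurableSpace Ω] (μ : Measure Ω) [IsProbabilityMeasure μ]
    (hatomless : Atomless μ)
    (g : ℝ → ℝ) (hg : MonotoneOn g (Set.Ioo (0 : ℝ) 1))
    (hgint : IntegrableOn g (Set.Ioo (0 : ℝ) 1))
    (U : (Ω → ℝ) → ℝ)
    (hU : ∀ X : Ω → ℝ, U X = ∫ t in Set.Ioo (0 : ℝ) 1, g t * leftQuantile μ X t) :
    (∀ X Y : Ω → ℝ, MemLp X ∞ μ → MemLp Y ∞ μ → Comonotonic μ X Y →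
      ∀ l : ℝ, 0 ≤ l → l ≤ 1 →
        U (fun ω => l * X ω + (1 - l) * Y ω) = l * U X + (1 - l) * U Y) ∧
    (∀ X Y : Ω → ℝ, MemLp X ∞ μ → MemLp Y ∞ μ → Comonotonic μ X Y → U X = U Y →
      ∀ l : ℝ, 0 ≤ l → l ≤ 1 → U Y ≤ U (fun ω => l * X ω + (1 - l) * Y ω)) ∧
    (∀ X Y : Ω → ℝ, MemLp X ∞ μ → MemLp Y ∞ μ → ConcaveOrdGE μ X Y → U X ≤ U Y) := by
  
  have hpart1 : ∀ X Y : Ω → ℝ, MemLp X ∞ μ → MemLp Y ∞ μ → Comonotonic μ X Y →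
      ∀ l : ℝ, 0 ≤ l → l ≤ 1 →
        U (fun ω => l * X ω + (1 - l) * Y ω) = l * U X + (1 - l) * U Y := by
    intro X Y hXm hYm hcom l hl0 hl1
    rcases eq_or_lt_of_le hl0 with rfl | hl0'
    · have hfun : (fun ω => (0:ℝ) * X ω + (1 - 0) * Y ω) = Y := by
        funext ω; ring
      rw [hfun]; ring
    rcases eq_or_lt_of_le hl1 with rfl | hl1'
    · have hfun : (fun ω => (1:ℝ) * X ω + (1 - 1) * Y ω) = X := by
        funext ω; ring
      rw [hfun]; ring
    obtain ⟨X', hX'm, hXX', CX, hCX0, hCX⟩ := memLinfty_setup hXm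
    obtain ⟨Y', hY'm, hYY', CY, hCY0, hCY⟩ := memLinfty_setup hYm
    have h1l : 0 < 1 - l := by linarith
    have hZeq : (fun ω => l * X ω + (1 - l) * Y ω) =ᵐ[μ]
        (fun ω => l * X' ω + (1 - l) * Y' ω) := by
      filter_upwards [hXX', hYY'] with ω h1 h2
      rw [h1, h2]
    have hcom' : Comonotonic μ (fun ω => l * X' ω) (fun ω => (1 - l) * Y' ω) :=
      comonotonic_smul (comonotonic_congr hXX' hYY' hcom) hl0 h1l.le
    have hlX : ∀ᵐ ω ∂μ, |l * X' ω| ≤ l * CX := by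
      filter_upwards [hCX] with ω hω
      rw [abs_mul, abs_of_pos hl0']
      exact mul_le_mul_of_nonneg_left hω hl0
    have hlY : ∀ᵐ ω ∂μ, |(1 - l) * Y' ω| ≤ (1 - l) * CY := by
      filter_upwards [hCY] with ω hω
      rw [abs_mul, abs_of_pos h1l]
      exact mul_le_mul_of_nonneg_left hω h1l.le
    have hQZ : ∀ t, t ∈ Set.Ioo (0:ℝ) 1 →
        leftQuantile μ (fun ω => l * X ω + (1 - l) * Y ω) t
          = l * leftQuantile μ X' t + (1 - l) * leftQuantile μ Y' t := by
      intro t ht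
      have e0 := congrFun (leftQuantile_congr (μ := μ) hZeq) t
      rw [e0]
      have e1 : (fun ω => l * X' ω + (1 - l) * Y' ω)
          = fun ω => (fun ω' => l * X' ω') ω + (fun ω' => (1 - l) * Y' ω') ω := rfl
      rw [e1, leftQuantile_add (hX'm.const_mul l) (hY'm.const_mul (1 - l)) hlX hlY hcom'
        ht.1 ht.2.le, leftQuantile_const_mul hX'm hCX hl0' ht.1 ht.2.le,
        leftQuantile_const_mul hY'm hCY h1l ht.1 ht.2.le]
    rw [hU, hU, hU]
    have hQXc := leftQuantile_congr (μ := μ) hXX'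
    have hQYc := leftQuantile_congr (μ := μ) hYY'
    rw [hQXc, hQYc]
    have hstep : ∫ t in Set.Ioo (0:ℝ) 1, g t * leftQuantile μ (fun ω => l * X ω + (1 - l) * Y ω) t
        = ∫ t in Set.Ioo (0:ℝ) 1,
            (l * (g t * leftQuantile μ X' t) + (1 - l) * (g t * leftQuantile μ Y' t)) := by
      refine setIntegral_congr_fun measurableSet_Ioo fun t ht => ?_
      rw [hQZ t ht]; ring
    rw [hstep, integral_add ((gQ_integrable hg hgint hCX).const_mul l)
      ((gQ_integrable hg hgint hCY).const_mul (1 - l)), integral_const_mul, integral_const_mul]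
  refine ⟨hpart1, ?_, ?_⟩
  · intro X Y hXm hYm hcom hUeq l hl0 hl1
    rw [hpart1 X Y hXm hYm hcom l hl0 hl1, hUeq]
    exact le_of_eq (by ring)
  · intro X Y hXm hYm hord
    obtain ⟨X', hX'm, hXX', CX, hCX0, hCX⟩ := memLinfty_setup hXm
    obtain ⟨Y', hY'm, hYY', CY, hCY0, hCY⟩ := memLinfty_setup hYm
    have hord' : ConcaveOrdGE μ X' Y' := concaveOrdGE_congr hXX' hYY' hord
    set D : ℝ → ℝ := fun t => leftQuantile μ X' t - leftQuantile μ Y' t with hDdef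
    have hDm : AEMeasurable D (volume.restrict (Set.Ioo (0:ℝ) 1)) :=
      (leftQuantile_aemeasurable hCX).sub (leftQuantile_aemeasurable hCY)
    have hDb : ∀ t ∈ Set.Ioo (0:ℝ) 1, |D t| ≤ CX + CY := by
      intro t ht
      have h1 := leftQuantile_mem_Icc hCX ht.1 ht.2.le
      have h2 := leftQuantile_mem_Icc hCY ht.1 ht.2.le
      rw [hDdef, abs_le]
      constructor
      · simp only
        have := h1.1; have := h2.2
        linarith [h1.1, h2.2]
      · simp only
        linarith [h1.2, h2.1]
    -- mean equality
    have hmean : ∫ t in Set.Ioo (0:ℝ) 1, leftQuantile μ X' t = ∫ t in Set.Ioo (0:ℝ) 1, leftQuantile μ Y' t := by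
      have tX := integral_quantile_transform hX'm hCX (continuous_id)
      have tY := integral_quantile_transform hY'm hCY (continuous_id)
      simp only [id] at tX tY
      rw [tX, tY]
      exact concave_ord_mean_eq hord'
    have hG1 : ∫ t in Set.Ioo (0:ℝ) 1, D t = 0 := by
      rw [hDdef]
      rw [integral_sub (quantile_integrableOn hCX le_rfl.subset measurableSet_Ioo)
        (quantile_integrableOn hCY le_rfl.subset measurableSet_Ioo)]
      rw [hmean, sub_self]
    have hG : ∀ s, 0 ≤ s → s ≤ 1 → 0 ≤ ∫ t in Set.Ioo 0 s, D t := by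
      intro s hs0 hs1
      rcases eq_or_lt_of_le hs0 with rfl | hs0'
      · simp
      rcases eq_or_lt_of_le hs1 with rfl | hs1'
      · rw [hG1]
      have hsub : Set.Ioo (0:ℝ) s ⊆ Set.Ioo 0 1 := Set.Ioo_subset_Ioo le_rfl hs1
      have hpm := partial_quantile_mono hX'm hY'm hCX hCY hord' (s := s) ⟨hs0', hs1'⟩
      rw [hDdef, integral_sub (quantile_integrableOn hCX hsub measurableSet_Ioo)
        (quantile_integrableOn hCY hsub measurableSet_Ioo)]
      linarith
    have habel := abel_summation_nonpos g hg hgint D hDm hDb hG hG1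
    rw [hU, hU, leftQuantile_congr (μ := μ) hXX', leftQuantile_congr (μ := μ) hYY']
    have hsplit : ∫ t in Set.Ioo (0:ℝ) 1, g t * D t
        = (∫ t in Set.Ioo (0:ℝ) 1, g t * leftQuantile μ X' t) - ∫ t in Set.Ioo (0:ℝ) 1, g t * leftQuantile μ Y' t := by
      have heq : ∀ t ∈ Set.Ioo (0:ℝ) 1, g t * D t = g t * leftQuantile μ X' t - g t * leftQuantile μ Y' t := by
        intro t _; rw [hDdef]; ring
      rw [setIntegral_congr_fun measurableSet_Ioo heq,
        integral_sub (gQ_integrable hg hgint hCX) (gQ_integrable hg hgint hCY)]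
    rw [hsplit] at habel
    linarith
end

section
/- Let (Ω,𝓕,ℙ) be an atomless probability space and define the binary relation ≿ on L^∞ by X ≿ Y iff ess-sup X ≥ ess-sup Y. Then ≿ exhibits diversification on independent pairs (if X and Y are independent and ess-sup X = ess-sup Y, then ess-sup(λX+(1−λ)Y) = ess-sup Y for all λ ∈ [0,1]) and exhibits strong risk seeking: X ≥_cv Y implies ess-sup X ≤ ess-sup Y. In particular, diversification on independent pairs does not imply weak risk aversion. -/
open MeasureTheory ProbabilityTheory Filter
open scoped ENNReal

section Helpers

variable {Ω : Type*} [MeasurableSpace Ω] {μ : Measure Ω} [IsProbabilityMeasure μ] {Z : Ω → ℝ}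

lemma memLinfty_ae_bound (hZ : MemLp Z ∞ μ) : ∃ C : ℝ, ∀ᵐ ω ∂μ, |Z ω| ≤ C := by
  refine ⟨(eLpNormEssSup Z μ).toReal, ?_⟩
  have h := hZ.2
  rw [eLpNorm_exponent_top] at h
  filter_upwards [enorm_ae_le_eLpNormEssSup Z μ] with ω hω
  have := ENNReal.toReal_mono h.ne hω
  simpa [Real.norm_eq_abs] using this

lemma S_nonempty (hZ : MemLp Z ∞ μ) : {x : ℝ | μ {ω | x < Z ω} = 0}.Nonempty := by
  obtain ⟨C, hC⟩ := memLinfty_ae_bound hZ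
  refine ⟨C, ?_⟩
  have h : ∀ᵐ ω ∂μ, Z ω ≤ C := hC.mono fun ω h => le_trans (le_abs_self _) h
  rw [ae_iff] at h
  simpa [not_le] using h

lemma S_bddBelow (hZ : MemLp Z ∞ μ) : BddBelow {x : ℝ | μ {ω | x < Z ω} = 0} := by
  obtain ⟨C, hC⟩ := memLinfty_ae_bound hZ
  refine ⟨-C, fun x hx => ?_⟩
  have hx' : ∀ᵐ ω ∂μ, Z ω ≤ x := by rw [ae_iff]; simpa [not_le] using hx
  haveI : (ae μ).NeBot := ae_neBot.2 (IsProbabilityMeasure.ne_zero μ)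
  obtain ⟨ω, h1, h2⟩ := (hC.and hx').exists
  have := neg_le_of_abs_le h1
  linarith

lemma S_mono {x y : ℝ} (hxy : x ≤ y) (hx : μ {ω | x < Z ω} = 0) : μ {ω | y < Z ω} = 0 :=
  measure_mono_null (fun ω hω => lt_of_le_of_lt hxy hω) hx

/-- a.e. `Z ≤ essSup Z`. -/
lemma meas_gt_essSupR (hZ : MemLp Z ∞ μ) :
    μ {ω | sInf {x : ℝ | μ {ω | x < Z ω} = 0} < Z ω} = 0 := by
  set m := sInf {x : ℝ | μ {ω | x < Z ω} = 0} with hm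
  have hsub : {ω | m < Z ω} ⊆ ⋃ n : ℕ, {ω | m + 1/(n+1) < Z ω} := by
    intro ω hω
    obtain ⟨n, hn⟩ := exists_nat_one_div_lt (K := ℝ) (sub_pos.2 hω)
    exact Set.mem_iUnion.2 ⟨n, by simp only [Set.mem_setOf_eq]; push_cast; push_cast at hn; linarith⟩
  refine measure_mono_null hsub (measure_iUnion_null fun n => ?_)
  obtain ⟨x, hxS, hxlt⟩ := exists_lt_of_csInf_lt (S_nonempty hZ)
    (show m < m + 1/((n:ℝ)+1) from lt_add_of_pos_right m (by positivity))
  exact S_mono hxlt.le hxS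

lemma meas_gt_pos_of_lt_essSupR (hZ : MemLp Z ∞ μ) {x : ℝ}
    (hx : x < sInf {x : ℝ | μ {ω | x < Z ω} = 0}) : μ {ω | x < Z ω} ≠ 0 := by
  intro h
  exact absurd (csInf_le (S_bddBelow hZ) h) (not_le.2 hx)

lemma convex_comb_gt {l a b c : ℝ} (hl : 0 ≤ l) (hl1 : l ≤ 1) (ha : c < a) (hb : c < b) :
    c < l * a + (1 - l) * b := by
  have hm : c < min a b := lt_min ha hb
  have h1 : l * min a b ≤ l * a := mul_le_mul_of_nonneg_left (min_le_left _ _) hl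
  have h2 : (1 - l) * min a b ≤ (1 - l) * b := mul_le_mul_of_nonneg_left (min_le_right _ _) (by linarith)
  have h3 : l * min a b + (1 - l) * min a b = min a b := by ring
  linarith

lemma convex_comb_le {l a b c : ℝ} (hl : 0 ≤ l) (hl1 : l ≤ 1) (ha : a ≤ c) (hb : b ≤ c) :
    l * a + (1 - l) * b ≤ c := by
  have h1 : l * a ≤ l * c := mul_le_mul_of_nonneg_left ha hl
  have h2 : (1 - l) * b ≤ (1 - l) * c := mul_le_mul_of_nonneg_left hb (by linarith)
  have h3 : l * c + (1 - l) * c = c := by ring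
  linarith

end Helpers

/-- The preference represented by the essential supremum
exhibits diversification on independent pairs and strong risk seeking, but
fails weak risk aversion. -/
theorem essSup_preference_diversification_indep_strongRiskSeeking
    {Ω : Type*} [MeasurableSpace Ω] (μ : Measure Ω) [IsProbabilityMeasure μ]
    (hatomless : Atomless μ) :
    (∀ X Y : Ω → ℝ, MemLp X ∞ μ → MemLp Y ∞ μ → IndepFun X Y μ →
      essSupR μ X = essSupR μ Y → ∀ l : ℝ, 0 ≤ l → l ≤ 1 →
        essSupR μ (fun ω => l * X ω + (1 - l) * Y ω) = essSupR μ Y) ∧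
    (∀ X Y : Ω → ℝ, MemLp X ∞ μ → MemLp Y ∞ μ → ConcaveOrdGE μ X Y →
      essSupR μ X ≤ essSupR μ Y) ∧
    (∃ X : Ω → ℝ, MemLp X ∞ μ ∧ Measurable X ∧ (∫ ω, X ω ∂μ) < essSupR μ X) := by
  refine ⟨?_, ?_, ?_⟩
  · -- Diversification on independent pairs
    intro X Y hX hY hind heq l hl hl1
    set m := essSupR μ Y with hm
    have hXle : μ {ω | m < X ω} = 0 := by
      have h := meas_gt_essSupR hX
      rw [show sInf {x : ℝ | μ {ω | x < X ω} = 0} = essSupR μ X from rfl, heq] at h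
      exact h
    have hYle : μ {ω | m < Y ω} = 0 := meas_gt_essSupR hY
    have hup : μ {ω | m < l * X ω + (1 - l) * Y ω} = 0 := by
      refine measure_mono_null ?_ (measure_union_null hXle hYle)
      intro ω hω
      simp only [Set.mem_union, Set.mem_setOf_eq]
      by_contra hcon
      push_neg at hcon
      exact absurd hω (not_lt.2 (convex_comb_le hl hl1 hcon.1 hcon.2))
    have hlow : ∀ x ∈ {x : ℝ | μ {ω | x < l * X ω + (1 - l) * Y ω} = 0}, m ≤ x := by
      intro x hx
      by_contra h
      push_neg at h
      have hXpos : μ {ω | x < X ω} ≠ 0 := by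
        refine meas_gt_pos_of_lt_essSupR hX ?_
        rw [show sInf {x : ℝ | μ {ω | x < X ω} = 0} = essSupR μ X from rfl, heq]
        exact h
      have hYpos : μ {ω | x < Y ω} ≠ 0 := meas_gt_pos_of_lt_essSupR hY h
      have hsub : {ω | x < X ω} ∩ {ω | x < Y ω} ⊆
          {ω | x < l * X ω + (1 - l) * Y ω} := by
        rintro ω ⟨h1, h2⟩
        exact convex_comb_gt hl hl1 h1 h2
      have hmul : μ ((X ⁻¹' Set.Ioi x) ∩ (Y ⁻¹' Set.Ioi x)) =
          μ (X ⁻¹' Set.Ioi x) * μ (Y ⁻¹' Set.Ioi x) :=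
        hind.measure_inter_preimage_eq_mul _ _ measurableSet_Ioi measurableSet_Ioi
      have hne : μ ({ω | x < X ω} ∩ {ω | x < Y ω}) ≠ 0 := by
        rw [show ({ω | x < X ω} ∩ {ω | x < Y ω}) =
          (X ⁻¹' Set.Ioi x) ∩ (Y ⁻¹' Set.Ioi x) from rfl, hmul]
        exact mul_ne_zero hXpos hYpos
      exact hne (measure_mono_null hsub hx)
    exact le_antisymm (csInf_le ⟨m, fun x hx => hlow x hx⟩ hup) (le_csInf ⟨m, hup⟩ hlow)
  · -- Strong risk seeking
    intro X Y hX hY hcv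
    set M := essSupR μ Y with hM
    have hYM : ∀ᵐ ω ∂μ, Y ω ≤ M := by
      have h : μ {ω | M < Y ω} = 0 := meas_gt_essSupR hY
      rw [ae_iff]
      simpa [not_le] using h
    have hconc_min : ConcaveOn ℝ Set.univ (fun t : ℝ => min t M) := by
      refine ⟨convex_univ, ?_⟩
      intro x _ y _ a b ha hb hab
      simp only [smul_eq_mul]
      refine le_min ?_ ?_
      · have h1 : a * min x M ≤ a * x := mul_le_mul_of_nonneg_left (min_le_left _ _) ha
        have h2 : b * min y M ≤ b * y := mul_le_mul_of_nonneg_left (min_le_left _ _) hb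
        linarith
      · have h1 : a * min x M ≤ a * M := mul_le_mul_of_nonneg_left (min_le_right _ _) ha
        have h2 : b * min y M ≤ b * M := mul_le_mul_of_nonneg_left (min_le_right _ _) hb
        have h3 : a * M + b * M = M := by rw [← add_mul, hab, one_mul]
        linarith
    have hid : ConcaveOn ℝ Set.univ (fun t : ℝ => t) :=
      ⟨convex_univ, fun x _ y _ a b _ _ _ => by simp [smul_eq_mul]⟩
    have hneg : ConcaveOn ℝ Set.univ (fun t : ℝ => -t) := by
      refine ⟨convex_univ, ?_⟩
      intro x _ y _ a b _ _ _
      simp only [smul_eq_mul]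
      exact le_of_eq (by ring)
    have h1 : (∫ ω, min (Y ω) M ∂μ) ≤ ∫ ω, min (X ω) M ∂μ := hcv _ hconc_min
    have h2 : (∫ ω, Y ω ∂μ) ≤ ∫ ω, X ω ∂μ := hcv _ hid
    have h3 : (∫ ω, -(Y ω) ∂μ) ≤ ∫ ω, -(X ω) ∂μ := hcv _ hneg
    rw [integral_neg, integral_neg] at h3
    have hEq : (∫ ω, X ω ∂μ) = ∫ ω, Y ω ∂μ := le_antisymm (by linarith) h2
    have hYint : (∫ ω, min (Y ω) M ∂μ) = ∫ ω, Y ω ∂μ :=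
      integral_congr_ae (hYM.mono fun ω h => min_eq_left h)
    have intX : Integrable X μ := hX.integrable le_top
    have intminX : Integrable (fun ω => min (X ω) M) μ :=
      intX.inf (integrable_const M)
    have intg : Integrable (fun ω => X ω - min (X ω) M) μ := intX.sub intminX
    have hgnon : 0 ≤ᵐ[μ] fun ω => X ω - min (X ω) M :=
      Filter.Eventually.of_forall fun ω => sub_nonneg.2 (min_le_left _ _)
    have hgint : (∫ ω, (X ω - min (X ω) M) ∂μ) = (∫ ω, X ω ∂μ) - ∫ ω, min (X ω) M ∂μ :=
      integral_sub intX intminX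
    have hg0 : (∫ ω, (X ω - min (X ω) M) ∂μ) = 0 := by
      refine le_antisymm ?_ (integral_nonneg fun ω => sub_nonneg.2 (min_le_left _ _))
      rw [hgint]; linarith
    have hae : (fun ω => X ω - min (X ω) M) =ᵐ[μ] 0 :=
      (integral_eq_zero_iff_of_nonneg_ae hgnon intg).1 hg0
    have hXM : ∀ᵐ ω ∂μ, X ω ≤ M := by
      filter_upwards [hae] with ω h
      have : X ω - min (X ω) M = 0 := h
      have hmin : min (X ω) M = X ω := by linarith
      calc X ω = min (X ω) M := hmin.symm
        _ ≤ M := min_le_right _ _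
    have hmem : μ {ω | M < X ω} = 0 := by
      rw [ae_iff] at hXM
      simpa [not_le] using hXM
    exact csInf_le (S_bddBelow hX) hmem
  · -- Failure of weak risk aversion
    obtain ⟨t, htm, -, htpos, htlt⟩ := hatomless Set.univ MeasurableSet.univ (by simp)
    rw [measure_univ] at htlt
    refine ⟨t.indicator (fun _ => (1 : ℝ)), ?_, measurable_const.indicator htm, ?_⟩
    · refine memLp_top_of_bound (measurable_const.indicator htm).aestronglyMeasurable 1
        (Filter.Eventually.of_forall fun ω => ?_)
      by_cases h : ω ∈ t <;>
        simp [Set.indicator_of_mem, Set.indicator_of_notMem, h]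
    · have hint : (∫ ω, t.indicator (fun _ => (1 : ℝ)) ω ∂μ) = (μ t).toReal := by
        rw [integral_indicator_const _ htm]; simp [Measure.real]
      have h1mem : μ {ω | 1 < t.indicator (fun _ => (1 : ℝ)) ω} = 0 := by
        have hemp : {ω | 1 < t.indicator (fun _ => (1 : ℝ)) ω} = (∅ : Set Ω) := by
          ext ω
          simp only [Set.mem_setOf_eq, Set.mem_empty_iff_false, iff_false, not_lt]
          by_cases h : ω ∈ t <;>
            simp [Set.indicator_of_mem, Set.indicator_of_notMem, h]
        rw [hemp]
        exact measure_empty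
      have hlb : ∀ x ∈ {x : ℝ | μ {ω | x < t.indicator (fun _ => (1 : ℝ)) ω} = 0}, (1:ℝ) ≤ x := by
        intro x hx
        by_contra h
        push_neg at h
        have hsub : t ⊆ {ω | x < t.indicator (fun _ => (1 : ℝ)) ω} := by
          intro ω hω
          simpa [Set.indicator_of_mem hω] using h
        exact absurd (measure_mono_null hsub hx) (ne_of_gt htpos)
      have hsup : essSupR μ (t.indicator (fun _ => (1 : ℝ))) = 1 :=
        le_antisymm (csInf_le ⟨1, fun x hx => hlb x hx⟩ h1mem) (le_csInf ⟨1, h1mem⟩ hlb)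
      rw [hint, hsup]
      have := (ENNReal.toReal_lt_toReal (measure_ne_top μ t) ENNReal.one_ne_top).2 htlt
      simpa using this
end
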